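/- arXiv:1602.01661 — 5 statements merged into one kernel-verified Lean document; each statement's English description precedes it below -/
import Mathlib

section
/- A finite group generated by left Engel elements is nilpotent (Baer's theorem, generation version): if G is a finite group generated by a set S such that every element of S is a left n-Engel element of G for some n, then G is nilpotent. -/
open scoped commutatorElement

/-- Iterated left-normed group commutator `[g, x, x, ..., x]` with `n` copies of `x`. -/
def engel {G : Type} [Group G] (g x : G) : ℕ → G
  | 0 => g
  | n + 1 => ⁅engel g x n, x⁆

/-!
Take a minimal counterexample `G`, so that proper subgroups generated by left Engel elements and
proper quotients of `G` are nilpotent. Any two nontrivial normal subgroups of `G` meet, so a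
minimal normal subgroup lies in every nontrivial normal subgroup. If every generator has a proper,
hence nilpotent, normal closure, that subgroup therefore lies in the centre of each of these normal
closures, hence in the centre of `G`, which is trivial.

Otherwise some generator `x` has normal closure `G`. For the conjugacy class `K` of `x`, proper
subgroups generated by elements of `K` are nilpotent, and no nilpotent subgroup generated by
elements of `K` is normal. Baer's argument shows that two maximal such subgroups sharing an element
of `K` coincide: for an extremal pair of distinct ones, the normalizer condition lets their common
part grow inside a third. Hence the normalizer `M` of a maximal one containing `x` satisfies
`h x h⁻¹ ∈ M → h ∈ M`, which for a left Engel `x` forces `M = G`.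
-/

section

open Subgroup

variable {G H : Type} [Group G] [Group H]

def IsLeftEngel (x : G) : Prop := ∃ n : ℕ, ∀ g : G, engel g x n = 1

theorem map_engel (f : G →* H) (g x : G) (n : ℕ) : f (engel g x n) = engel (f g) (f x) n := by
  induction n with
  | zero => rfl
  | succ n ih => rw [engel, engel, map_commutatorElement, ih]

theorem IsLeftEngel.map_of_surjective {f : G →* H} (hf : Function.Surjective f) {x : G}
    (hx : IsLeftEngel x) : IsLeftEngel (f x) := by
  obtain ⟨n, hn⟩ := hx
  refine ⟨n, fun h => ?_⟩
  obtain ⟨g, rfl⟩ := hf h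
  rw [← map_engel, hn, map_one]

theorem IsLeftEngel.of_coe {L : Subgroup G} {x : L} (hx : IsLeftEngel (x : G)) :
    IsLeftEngel x := by
  obtain ⟨n, hn⟩ := hx
  exact ⟨n, fun g => L.subtype_injective (by rw [map_engel, map_one]; exact hn g)⟩

theorem IsLeftEngel.conj {x : G} (hx : IsLeftEngel x) (c : G) : IsLeftEngel (c * x * c⁻¹) :=
  hx.map_of_surjective (f := (MulAut.conj c).toMonoidHom) (MulAut.conj c).surjective

theorem isLeftEngel_of_mem_conjugatesOfSet {s : Set G} (hs : ∀ x ∈ s, IsLeftEngel x) {k : G}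
    (hk : k ∈ Group.conjugatesOfSet s) : IsLeftEngel k := by
  obtain ⟨x, hx, hxk⟩ := Group.mem_conjugatesOfSet_iff.1 hk
  obtain ⟨c, rfl⟩ := isConj_iff.1 hxk
  exact (hs x hx).conj c

theorem IsLeftEngel.eq_top_of_conj_mem_imp_mem {x : G} (hx : IsLeftEngel x) {M : Subgroup G}
    (hxM : x ∈ M) (hM : ∀ h : G, h * x * h⁻¹ ∈ M → h ∈ M) : M = ⊤ := by
  obtain ⟨n, hn⟩ := hx
  refine (eq_top_iff' M).2 fun v => by_contra fun hv => ?_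
  have hnotMem : ∀ j, engel v x j ∉ M := by
    intro j
    induction j with
    | zero => exact hv
    | succ j ih =>
      intro hmem
      have hconj : engel v x j * x * (engel v x j)⁻¹ = engel v x (j + 1) * x := by
        rw [engel, commutatorElement_def]
        group
      exact ih (hM _ (hconj ▸ M.mul_mem hmem hxM))
  exact hnotMem n (hn v ▸ M.one_mem)

theorem Group.conj_image_conjugatesOfSet (s : Set G) (g : G) :
    ⇑(MulAut.conj g) '' Group.conjugatesOfSet s = Group.conjugatesOfSet s := by
  refine Set.Subset.antisymm (Set.image_subset_iff.2 fun k hk => Group.conj_mem_conjugatesOfSet hk)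
    fun k hk => ⟨g⁻¹ * k * g, ?_, by simp [mul_assoc]⟩
  simpa using Group.conj_mem_conjugatesOfSet (c := g⁻¹) hk

theorem card_subgroup_lt_of_ne_top [Finite G] {L : Subgroup G} (h : L ≠ ⊤) :
    Nat.card L < Nat.card G := by
  rw [← L.index_mul_card]
  exact lt_mul_of_one_lt_left Nat.card_pos (one_lt_index_of_ne_top h)

theorem card_quotient_lt_of_ne_bot [Finite G] {W : Subgroup G} (h : W ≠ ⊥) :
    Nat.card (G ⧸ W) < Nat.card G := by
  rw [W.card_eq_card_quotient_mul_card_subgroup]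
  exact lt_mul_of_one_lt_right Nat.card_pos ((one_lt_card_iff_ne_bot W).2 h)

theorem isNilpotent_of_inf_eq_bot {W₁ W₂ : Subgroup G} [W₁.Normal] [W₂.Normal]
    [Group.IsNilpotent (G ⧸ W₁)] [Group.IsNilpotent (G ⧸ W₂)] (h : W₁ ⊓ W₂ = ⊥) :
    Group.IsNilpotent G :=
  Subgroup.isNilpotent_of_ker_le_center
    ((QuotientGroup.mk' W₁).prod (QuotientGroup.mk' W₂)) <| by
    rw [MonoidHom.ker_prod, QuotientGroup.ker_mk', QuotientGroup.ker_mk', h]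
    exact bot_le

theorem le_of_minimal_normal (hG : ¬ Group.IsNilpotent G)
    (hquot : ∀ (W : Subgroup G) [W.Normal], W ≠ ⊥ → Group.IsNilpotent (G ⧸ W))
    {V : Subgroup G} (hV : Minimal (fun W : Subgroup G => W.Normal ∧ W ≠ ⊥) V)
    {W : Subgroup G} [W.Normal] (hW : W ≠ ⊥) : V ≤ W := by
  have := hV.prop.1
  by_cases hWV : W ⊓ V = ⊥
  · have := hquot W hW
    have := hquot V hV.prop.2
    exact absurd (isNilpotent_of_inf_eq_bot hWV) hG
  · rw [← hV.eq_of_le ⟨inferInstance, hWV⟩ inf_le_right]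
    exact inf_le_left

theorem isNilpotent_of_isNilpotent_normalClosure [Finite G] {S : Set G} (hgen : closure S = ⊤)
    (hquot : ∀ (W : Subgroup G) [W.Normal], W ≠ ⊥ → Group.IsNilpotent (G ⧸ W))
    (hS : ∀ x ∈ S, Group.IsNilpotent (normalClosure {x})) : Group.IsNilpotent G := by
  by_contra hG
  have hZ : center G = ⊥ :=
    by_contra fun hZ => hG (Group.of_quotient_center_nilpotent (hquot _ hZ))
  have : Nontrivial G := by
    by_contra h
    rw [not_nontrivial_iff_subsingleton] at h
    exact hG Group.isNilpotent_of_subsingleton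
  obtain ⟨V, -, hV⟩ := Finite.exists_le_minimal
    (p := fun W : Subgroup G => W.Normal ∧ W ≠ ⊥) (a := ⊤) ⟨inferInstance, top_ne_bot⟩
  have hVS : V ≤ centralizer S := by
    intro v hv x hx
    by_cases hx1 : x = 1
    · simp [hx1]
    set N := normalClosure {x}
    have hxN : x ∈ N := subset_normalClosure rfl
    have : Nontrivial N := (nontrivial_iff_ne_bot N).2 fun h => hx1 (by simpa [h] using hxN)
    have := hS x hx
    have hZN : (center N).map N.subtype ≠ ⊥ :=
      (map_eq_bot_iff_of_injective _ N.subtype_injective).not.2 (Group.IsNilpotent.center_ne_bot N)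
    obtain ⟨z, hz, rfl⟩ := le_of_minimal_normal hG hquot hV hZN hv
    exact congrArg Subtype.val (mem_center_iff.1 hz ⟨x, hxN⟩)
  apply hV.prop.2
  rw [← le_bot_iff, ← hZ, ← centralizer_univ, ← coe_top, ← hgen, centralizer_closure]
  exact hVS

theorem lt_normalizer_inf_of_lt {E Y : Subgroup G} [Group.IsNilpotent Y] (h : E < Y) :
    E < normalizer (E : Set G) ⊓ Y := by
  have hlt := Group.normalizerCondition_of_isNilpotent (E.subgroupOf Y)
    (lt_top_iff_ne_top.2 fun h' => h.not_ge (subgroupOf_eq_top.1 h'))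
  rw [← subgroupOf_normalizer_eq h.le] at hlt
  obtain ⟨w, hw, hwE⟩ := SetLike.exists_of_lt hlt
  exact SetLike.lt_iff_le_and_exists.2 ⟨le_inf le_normalizer h.le, (w : G),
    mem_inf.2 ⟨mem_subgroupOf.1 hw, w.2⟩, fun hwE' => hwE (mem_subgroupOf.2 hwE')⟩

variable {K : Set G}

structure IsNilpotentKSubgroup (K : Set G) (Y : Subgroup G) : Prop where
  nonempty : (K ∩ Y).Nonempty
  isNilpotent : Group.IsNilpotent Y
  closure_inter : closure (K ∩ Y) = Y

theorem IsNilpotentKSubgroup.closure_of_subset {T : Set G} (hTK : T ⊆ K) (hT : T.Nonempty)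
    (hnil : Group.IsNilpotent (closure T)) : IsNilpotentKSubgroup K (closure T) where
  nonempty := hT.mono fun _ ht => ⟨hTK ht, subset_closure ht⟩
  isNilpotent := hnil
  closure_inter := le_antisymm ((closure_le _).2 Set.inter_subset_right)
    (closure_mono fun _ ht => ⟨hTK ht, subset_closure ht⟩)

theorem IsNilpotentKSubgroup.map_mulEquiv {Y : Subgroup G} (hY : IsNilpotentKSubgroup K Y)
    (φ : G ≃* G) (hφ : ⇑φ '' K = K) : IsNilpotentKSubgroup K (Y.map (φ : G →* G)) := by
  have hKY : K ∩ (Y.map (φ : G →* G) : Set G) = (φ : G →* G) '' (K ∩ Y) := by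
    rw [coe_map, MonoidHom.coe_coe, Set.image_inter φ.injective, hφ]
  have := hY.isNilpotent
  refine ⟨hKY ▸ hY.nonempty.image _, Group.nilpotent_of_mulEquiv
    (Y.equivMapOfInjective _ φ.injective), ?_⟩
  rw [hKY, ← MonoidHom.map_closure, hY.closure_inter]

theorem maximal_map_mulEquiv {Y : Subgroup G} (hY : Maximal (IsNilpotentKSubgroup K) Y)
    (φ : G ≃* G) (hφ : ⇑φ '' K = K) :
    Maximal (IsNilpotentKSubgroup K) (Y.map (φ : G →* G)) := by
  have hφ' : ⇑φ.symm '' K = K := by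
    have : ⇑φ.symm '' (⇑φ '' K) = K := by simp [Set.image_image]
    rwa [hφ] at this
  refine ⟨hY.prop.map_mulEquiv φ hφ, fun Y' hY' hle => ?_⟩
  have hcomap : Y'.comap (φ : G →* G) ≤ Y := by
    refine map_equiv_eq_comap_symm φ.symm Y' ▸ hY.2 (hY'.map_mulEquiv φ.symm hφ') ?_
    rw [map_equiv_eq_comap_symm, MulEquiv.symm_symm]
    exact map_le_iff_le_comap.1 hle
  rw [← map_comap_eq_self_of_surjective (f := (φ : G →* G)) φ.surjective Y']
  exact map_mono hcomap

theorem exists_mem_normalizer_of_lt [Finite G] (hK : ∀ g : G, ⇑(MulAut.conj g) '' K = K)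
    {D Y : Subgroup G} [Group.IsNilpotent Y] (hYK : closure (K ∩ Y) = Y)
    (hDK : closure (K ∩ D) = D) (hDY : D < Y) :
    ∃ w ∈ K ∩ Y, w ∉ D ∧ w ∈ normalizer (D : Set G) := by
  -- enlarge `D` inside `Y` as far as possible without meeting new elements of `K`
  obtain ⟨E, hDE, hE⟩ := Finite.exists_le_maximal
    (p := fun E : Subgroup G => E ≤ Y ∧ K ∩ E ⊆ D) (a := D) ⟨hDY.le, Set.inter_subset_right⟩
  have hEY : E < Y := lt_of_le_of_ne hE.prop.1 fun h =>
    hDY.not_ge (hYK ▸ (closure_le D).2 (h ▸ hE.prop.2))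
  have hED : closure (K ∩ E) = D := le_antisymm ((closure_le D).2 hE.prop.2)
    (hDK ▸ closure_mono (Set.inter_subset_inter_right K hDE))
  have hnot := hE.not_prop_of_gt (lt_normalizer_inf_of_lt hEY)
  obtain ⟨w, hwF, hwD⟩ := Set.not_subset.1 fun hsub => hnot ⟨inf_le_right, hsub⟩
  have hwN : w ∈ normalizer (E : Set G) := hwF.2.1
  obtain ⟨hwK, -, hwY⟩ := hwF
  refine ⟨w, ⟨hwK, hwY⟩, hwD, hED ▸ normalizer_le_normalizer_closure _ ?_⟩
  rw [mem_normalizer_iff_conj_image_eq] at hwN ⊢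
  rw [Set.image_inter (MulAut.conj w).injective, hK, hwN]

theorem IsNilpotentKSubgroup.closure_of_le_normalizer
    (hproper : ∀ T ⊆ K, closure T ≠ ⊤ → Group.IsNilpotent (closure T))
    (hnormal : ∀ D, IsNilpotentKSubgroup K D → ¬ D.Normal) {D : Subgroup G}
    (hD : IsNilpotentKSubgroup K D) {T : Set G} (hTK : T ⊆ K) (hT : T.Nonempty)
    (hTD : closure T ≤ normalizer (D : Set G)) : IsNilpotentKSubgroup K (closure T) :=
  .closure_of_subset hTK hT <| hproper T hTK fun h =>
    hnormal D hD (normalizer_eq_top_iff.1 (top_le_iff.1 (h ▸ hTD)))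

theorem mem_of_maximal_of_mem_normalizer
    (hproper : ∀ T ⊆ K, closure T ≠ ⊤ → Group.IsNilpotent (closure T))
    (hnormal : ∀ D, IsNilpotentKSubgroup K D → ¬ D.Normal) {Y : Subgroup G}
    (hY : Maximal (IsNilpotentKSubgroup K) Y) {z : G} (hzK : z ∈ K)
    (hzY : z ∈ normalizer (Y : Set G)) : z ∈ Y := by
  have hTK : K ∩ Y ∪ {z} ⊆ K := Set.union_subset Set.inter_subset_left (by simpa using hzK)
  have hTY : closure (K ∩ Y ∪ {z}) ≤ normalizer (Y : Set G) :=
    (closure_le _).2 (Set.union_subset (fun _ hu => le_normalizer hu.2) (by simpa using hzY))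
  have hT := hY.prop.closure_of_le_normalizer hproper hnormal hTK ⟨z, Or.inr rfl⟩ hTY
  have hYT : Y ≤ closure (K ∩ Y ∪ {z}) := by
    conv_lhs => rw [← hY.prop.closure_inter]
    exact Subgroup.closure_mono Set.subset_union_left
  exact hY.2 hT hYT (subset_closure (Or.inr rfl))

theorem exists_maximal_ge_of_ne [Finite G] (hK : ∀ g : G, ⇑(MulAut.conj g) '' K = K)
    (hproper : ∀ T ⊆ K, closure T ≠ ⊤ → Group.IsNilpotent (closure T))
    (hnormal : ∀ D, IsNilpotentKSubgroup K D → ¬ D.Normal) {A B : Subgroup G}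
    (hA : Maximal (IsNilpotentKSubgroup K) A) (hB : Maximal (IsNilpotentKSubgroup K) B)
    (hAB : A ≠ B) (hABK : (K ∩ (A ⊓ B : Subgroup G)).Nonempty) :
    ∃ C, Maximal (IsNilpotentKSubgroup K) C ∧ closure (K ∩ (A ⊓ B : Subgroup G)) ≤ C ∧
      (∃ a ∈ K ∩ (A ⊓ C : Subgroup G), a ∉ closure (K ∩ (A ⊓ B : Subgroup G))) ∧
      ∃ b ∈ K ∩ (B ⊓ C : Subgroup G), b ∉ closure (K ∩ (A ⊓ B : Subgroup G)) := by
  set D := closure (K ∩ (A ⊓ B : Subgroup G))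
  have hDAB : D ≤ A ⊓ B := (closure_le _).2 Set.inter_subset_right
  have := hA.prop.isNilpotent
  have := hB.prop.isNilpotent
  have hD : IsNilpotentKSubgroup K D := .closure_of_subset Set.inter_subset_left hABK
    (Group.nilpotent_of_mulEquiv (subgroupOfEquivOfLe (hDAB.trans inf_le_left)))
  have hDA : D < A := lt_of_le_of_ne (hDAB.trans inf_le_left) fun hDA =>
    hAB (hA.eq_of_le hB.prop (hDA ▸ hDAB.trans inf_le_right))
  have hDB : D < B := lt_of_le_of_ne (hDAB.trans inf_le_right) fun hDB =>
    hAB (hB.eq_of_le hA.prop (hDB ▸ hDAB.trans inf_le_left)).symm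
  obtain ⟨a, ⟨haK, haA⟩, haD, haN⟩ := exists_mem_normalizer_of_lt hK hA.prop.closure_inter
    hD.closure_inter hDA
  obtain ⟨b, ⟨hbK, hbB⟩, hbD, hbN⟩ := exists_mem_normalizer_of_lt hK hB.prop.closure_inter
    hD.closure_inter hDB
  have hTK : K ∩ D ∪ {a, b} ⊆ K := by
    simp only [Set.union_subset_iff, Set.inter_subset_left, Set.insert_subset_iff,
      Set.singleton_subset_iff, true_and]
    exact ⟨haK, hbK⟩
  have hTN : closure (K ∩ D ∪ {a, b}) ≤ normalizer (D : Set G) := by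
    simp only [closure_le, Set.union_subset_iff, Set.insert_subset_iff, Set.singleton_subset_iff]
    exact ⟨fun _ hu => le_normalizer hu.2, haN, hbN⟩
  obtain ⟨C, hTC, hC⟩ := Finite.exists_le_maximal
    (hD.closure_of_le_normalizer hproper hnormal hTK ⟨a, by simp⟩ hTN)
  have hDC : D ≤ C := by
    conv_lhs => rw [← hD.closure_inter]
    exact (Subgroup.closure_mono Set.subset_union_left).trans hTC
  exact ⟨C, hC, hDC, ⟨a, ⟨haK, haA, hTC (subset_closure (by simp))⟩, haD⟩,
    b, ⟨hbK, hbB, hTC (subset_closure (by simp))⟩, hbD⟩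

theorem eq_of_maximal_of_inter_nonempty [Finite G] (hK : ∀ g : G, ⇑(MulAut.conj g) '' K = K)
    (hproper : ∀ T ⊆ K, closure T ≠ ⊤ → Group.IsNilpotent (closure T))
    (hnormal : ∀ D, IsNilpotentKSubgroup K D → ¬ D.Normal) {Y₁ Y₂ : Subgroup G}
    (h₁ : Maximal (IsNilpotentKSubgroup K) Y₁) (h₂ : Maximal (IsNilpotentKSubgroup K) Y₂)
    (h : (K ∩ (Y₁ ⊓ Y₂ : Subgroup G)).Nonempty) : Y₁ = Y₂ := by
  by_contra hne
  obtain ⟨⟨A, B⟩, ⟨hA, hB, hAB, hABK⟩, hmax⟩ := Set.Finite.exists_maximalFor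
    (fun p : Subgroup G × Subgroup G => closure (K ∩ (p.1 ⊓ p.2 : Subgroup G)))
    {p | Maximal (IsNilpotentKSubgroup K) p.1 ∧ Maximal (IsNilpotentKSubgroup K) p.2 ∧
      p.1 ≠ p.2 ∧ (K ∩ (p.1 ⊓ p.2 : Subgroup G)).Nonempty}
    (Set.toFinite _) ⟨(Y₁, Y₂), h₁, h₂, hne, h⟩
  dsimp only at hA hB hAB hABK hmax
  set D := closure (K ∩ (A ⊓ B : Subgroup G))
  obtain ⟨C, hC, hDC, ⟨a, ⟨haK, haAC⟩, haD⟩, b, ⟨hbK, hbBC⟩, hbD⟩ :=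
    exists_maximal_ge_of_ne hK hproper hnormal hA hB hAB hABK
  -- otherwise `(C, Y)` would be a pair of the same kind with a larger common `K`-part
  have hC_eq : ∀ Y, Maximal (IsNilpotentKSubgroup K) Y → D ≤ Y → ∀ w ∈ K,
      w ∈ Y ⊓ C → w ∉ D → C = Y := by
    intro Y hY hDY w hwK ⟨hwY, hwC⟩ hwD
    by_contra hCY
    have hDCY : D ≤ closure (K ∩ (C ⊓ Y : Subgroup G)) :=
      Subgroup.closure_mono fun u hu => ⟨hu.1, hDC (subset_closure hu), hDY (subset_closure hu)⟩
    exact hwD (hmax (j := (C, Y)) ⟨hC, hY, hCY, w, hwK, hwC, hwY⟩ hDCY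
      (subset_closure ⟨hwK, hwC, hwY⟩))
  have hDA : D ≤ A := ((closure_le _).2 Set.inter_subset_right).trans inf_le_left
  have hDB : D ≤ B := ((closure_le _).2 Set.inter_subset_right).trans inf_le_right
  exact hAB ((hC_eq A hA hDA a haK haAC haD).symm.trans (hC_eq B hB hDB b hbK hbBC hbD))

theorem not_isLeftEngel_of_mem [Finite G] (hK : ∀ g : G, ⇑(MulAut.conj g) '' K = K)
    (hproper : ∀ T ⊆ K, closure T ≠ ⊤ → Group.IsNilpotent (closure T))
    (hnormal : ∀ D, IsNilpotentKSubgroup K D → ¬ D.Normal) {x : G} (hxK : x ∈ K) :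
    ¬ IsLeftEngel x := by
  intro hx
  have hcyc : Group.IsNilpotent (closure {x}) := by
    rw [← zpowers_eq_closure]
    let := IsCyclic.commGroup (α := zpowers x)
    infer_instance
  obtain ⟨Y, hxY, hY⟩ := Finite.exists_le_maximal
    (IsNilpotentKSubgroup.closure_of_subset (Set.singleton_subset_iff.2 hxK) ⟨x, rfl⟩ hcyc)
  replace hxY : x ∈ Y := hxY (subset_closure rfl)
  apply hnormal Y hY.prop
  rw [← normalizer_eq_top_iff]
  refine hx.eq_top_of_conj_mem_imp_mem (le_normalizer hxY) fun h hh => ?_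
  have hz : h * x * h⁻¹ ∈ K := hK h ▸ ⟨x, hxK, rfl⟩
  have hzY : h * x * h⁻¹ ∈ Y := mem_of_maximal_of_mem_normalizer hproper hnormal hY hz hh
  rw [mem_normalizer_iff_map_conj_eq]
  exact (eq_of_maximal_of_inter_nonempty hK hproper hnormal hY (maximal_map_mulEquiv hY _ (hK h))
    ⟨_, hz, hzY, x, hxY, rfl⟩).symm

theorem not_isLeftEngel_of_normalClosure_eq_top [Finite G] (hG : ¬ Group.IsNilpotent G) {x : G}
    (hx : normalClosure {x} = ⊤)
    (hsub : ∀ T ⊆ Group.conjugatesOfSet {x}, closure T ≠ ⊤ →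
      Group.IsNilpotent (closure T)) :
    ¬ IsLeftEngel x := by
  refine not_isLeftEngel_of_mem (Group.conj_image_conjugatesOfSet {x}) hsub (fun D hD hDn => ?_)
    (Group.subset_conjugatesOfSet rfl)
  obtain ⟨k, hk, hkD⟩ := hD.nonempty
  obtain ⟨c, rfl⟩ := isConj_iff.1 (by simpa using Group.mem_conjugatesOfSet_iff.1 hk)
  have hxD : x ∈ D := by simpa [mul_assoc] using hDn.conj_mem _ hkD c⁻¹
  have hDtop : D = ⊤ := top_le_iff.1 (hx ▸ normalClosure_le_normal (by simpa using hxD))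
  subst hDtop
  have := hD.isNilpotent
  exact hG (Group.nilpotent_of_mulEquiv topEquiv)

theorem isNilpotent_of_engel_generators_of_proper_nilpotent [Finite G] {S : Set G}
    (hgen : closure S = ⊤) (hS : ∀ x ∈ S, IsLeftEngel x)
    (hsub : ∀ T : Set G, (∀ t ∈ T, IsLeftEngel t) → closure T ≠ ⊤ →
      Group.IsNilpotent (closure T))
    (hquot : ∀ (W : Subgroup G) [W.Normal], W ≠ ⊥ → Group.IsNilpotent (G ⧸ W)) :
    Group.IsNilpotent G := by
  by_contra hG
  refine hG (isNilpotent_of_isNilpotent_normalClosure hgen hquot fun x hx => ?_)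
  have hK : ∀ T ⊆ Group.conjugatesOfSet {x}, closure T ≠ ⊤ →
      Group.IsNilpotent (closure T) :=
    fun T hT => hsub T fun t ht =>
      isLeftEngel_of_mem_conjugatesOfSet (by simpa using hS x hx) (hT ht)
  by_cases htop : normalClosure {x} = ⊤
  · exact absurd (hS x hx) (not_isLeftEngel_of_normalClosure_eq_top hG htop hK)
  · exact hK _ subset_rfl htop

end

/-- Baer: a finite group generated by a set of left Engel elements is
nilpotent. -/
theorem finite_group_generated_by_engel_elements_isNilpotent
    (G : Type) [Group G] [Finite G] (S : Set G)
    (hgen : Subgroup.closure S = ⊤)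
    (hEngel : ∀ x ∈ S, ∃ n : ℕ, ∀ g : G, engel g x n = 1) :
    Group.IsNilpotent G := by
  induction hn : Nat.card G using Nat.strong_induction_on generalizing G S with
  | _ n ih =>
  subst hn
  refine isNilpotent_of_engel_generators_of_proper_nilpotent hgen hEngel
    (fun T hT hne => ?_) (fun W _ hW => ?_)
  · exact ih _ (card_subgroup_lt_of_ne_top hne) _ ((Subgroup.closure T).subtype ⁻¹' T)
      (Subgroup.closure_preimage_eq_top T) (fun t ht => (hT t ht).of_coe) rfl
  · refine ih _ (card_quotient_lt_of_ne_bot hW) _ (QuotientGroup.mk' W '' S) ?_ ?_ rfl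
    · rw [← MonoidHom.map_closure, hgen, Subgroup.map_top_of_surjective _
        (QuotientGroup.mk'_surjective W)]
    · rintro _ ⟨x, hx, rfl⟩
      exact IsLeftEngel.map_of_surjective (QuotientGroup.mk'_surjective W) (hEngel x hx)
end

section
/- Let P be a powerful finite p-group generated by d elements. Then P is a product of at most d cyclic subgroups; in particular, if P has exponent dividing e then |P| ≤ e^d. -/
/-!
Put `P₀ = P` and `Pₖ₊₁ = Pₖ^p`. Being powerful passes down this series: every `Pₖ` is
powerfully embedded in `P`, i.e. `⁅Pₖ, P⁆ ≤ Pₖ^p` (`≤ (Pₖ^2)^2` for `p = 2`). This is proved by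
induction on `|P|` through quotients, closed by a Frattini-type argument (a normal subgroup
`A` with `A ≤ A^p ⁅A, P⁆` is trivial) and, when the subgroups involved vanish, by the formula
`⁅x^p, y⁆ = ⁅x, ⁅x, y⁆⁆^(p choose 2) ⁅x, y⁆^p`. Consequently `x ↦ x^p` induces homomorphisms
`Pₖ → Pₖ₊₁/Pₖ₊₂`, so `Pₖ/Pₖ₊₁` is central in `P/Pₖ₊₁` and generated by the images of the
`xᵢ^(p^k)`. Approximating `g` modulo `P₁, P₂, …` by products `∏ xᵢ^nᵢ`, the correction at each
level is central and merges into the exponents; the series reaches `1`, giving `g = ∏ xᵢ^nᵢ`.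
Reducing the exponents modulo `e` bounds `|P|` by `e^d`.
-/

def powOf {P : Type} [Group P] (H : Subgroup P) (n : ℕ) : Subgroup P :=
  Subgroup.closure ((fun x => x ^ n) '' (H : Set P))

def IsPowerful (P : Type) [Group P] (p : ℕ) : Prop :=
  if p = 2 then ⁅(⊤ : Subgroup P), (⊤ : Subgroup P)⁆ ≤ powOf ⊤ 4
  else ⁅(⊤ : Subgroup P), (⊤ : Subgroup P)⁆ ≤ powOf ⊤ p

open scoped commutatorElement

section PowOf

variable {G : Type} [Group G]

theorem pow_mem_powOf {H : Subgroup G} {x : G} (hx : x ∈ H) (n : ℕ) : x ^ n ∈ powOf H n :=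
  Subgroup.subset_closure ⟨x, hx, rfl⟩

theorem powOf_le {H K : Subgroup G} {n : ℕ} (h : ∀ x ∈ H, x ^ n ∈ K) : powOf H n ≤ K :=
  (Subgroup.closure_le _).mpr <| by rintro _ ⟨x, hx, rfl⟩; exact h x hx

theorem powOf_le_self (H : Subgroup G) (n : ℕ) : powOf H n ≤ H :=
  powOf_le fun _ hx => H.pow_mem hx n

theorem map_powOf {G' : Type} [Group G'] (f : G →* G') (H : Subgroup G) (n : ℕ) :
    (powOf H n).map f = powOf (H.map f) n := by
  simp only [powOf, MonoidHom.map_closure, Subgroup.coe_map, Set.image_image, map_pow]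

instance powOf_normal (H : Subgroup G) [hH : H.Normal] (n : ℕ) : (powOf H n).Normal := by
  refine ⟨fun x hx g => ?_⟩
  induction hx using Subgroup.closure_induction with
  | mem _ hy =>
    obtain ⟨y, hy, rfl⟩ := hy
    rw [← conj_pow]
    exact pow_mem_powOf (hH.conj_mem y hy g) n
  | one => simp
  | mul a b _ _ ha hb => simpa [mul_assoc] using Subgroup.mul_mem _ ha hb
  | inv a _ ha => simpa [mul_assoc] using Subgroup.inv_mem _ ha

end PowOf

section PGroup

variable {G : Type} [Group G] {p : ℕ} [Fact p.Prime]

theorem card_quotient_lt_card [Finite G] {L : Subgroup G} [L.Normal] (hL : L ≠ ⊥) :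
    Nat.card (G ⧸ L) < Nat.card G := by
  rw [← L.card_mul_index]
  exact lt_mul_left (Nat.pos_of_ne_zero L.index_ne_zero_of_finite)
    (L.one_lt_card_iff_ne_bot.mpr hL)

theorem IsPGroup.powOf_top_ne_top [Finite G] [Nontrivial G] (hG : IsPGroup p G) :
    powOf (⊤ : Subgroup G) p ≠ ⊤ := by
  intro htop
  have := hG.isNilpotent
  have hsurj : Function.Surjective (Abelianization.of : G →* Abelianization G) :=
    QuotientGroup.mk'_surjective _
  have : Nontrivial (Abelianization G) :=
    QuotientGroup.nontrivial_iff.mpr (Group.IsSolvable.commutator_lt_top_of_nontrivial G).ne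
  have hpow : Function.Surjective (powMonoidHom p : Abelianization G →* Abelianization G) := by
    rw [← MonoidHom.range_eq_top, eq_top_iff, ← Subgroup.map_top_of_surjective _ hsurj, ← htop,
      map_powOf, Subgroup.map_top_of_surjective _ hsurj]
    exact powOf_le fun x _ => ⟨x, rfl⟩
  obtain ⟨x, hx⟩ := exists_prime_orderOf_dvd_card' p
    ((hG.of_surjective _ hsurj).card_eq_or_dvd.resolve_left Finite.one_lt_card.ne')
  have : x = 1 := Finite.injective_iff_surjective.mpr hpow (by simp [← hx, pow_orderOf_eq_one])
  exact (Fact.out : p.Prime).one_lt.ne' (by rw [← hx, this, orderOf_one])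

theorem IsPGroup.eq_bot_of_le_powOf [Finite G] (hG : IsPGroup p G) {A : Subgroup G}
    (h : A ≤ powOf A p) : A = ⊥ := by
  by_contra hA
  have := A.nontrivial_iff_ne_bot.mpr hA
  apply (hG.to_subgroup A).powOf_top_ne_top
  rw [eq_top_iff, ← Subgroup.map_le_map_iff_of_injective A.subtype_injective, map_powOf,
    ← MonoidHom.range_eq_map, Subgroup.range_subtype]
  exact h

theorem eq_bot_of_le_commutator_top [Group.IsNilpotent G] {A : Subgroup G} (h : A ≤ ⁅A, ⊤⁆) :
    A = ⊥ := by
  obtain ⟨n, hn⟩ := Subgroup.nilpotent_iff_lowerCentralSeries.mp ‹_›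
  have hle : ∀ k, A ≤ Subgroup.lowerCentralSeries ⊤ k := by
    intro k
    induction k with
    | zero => exact le_top
    | succ k ih => exact h.trans (Subgroup.commutator_mono ih le_rfl)
  exact le_bot_iff.mp (hn ▸ hle n)

theorem IsPGroup.eq_bot_of_le_powOf_sup_commutator [Finite G] (hG : IsPGroup p G)
    {A : Subgroup G} [A.Normal] (h : A ≤ powOf A p ⊔ ⁅A, ⊤⁆) : A = ⊥ := by
  have := hG.isNilpotent
  apply eq_bot_of_le_commutator_top
  have : A.map (QuotientGroup.mk' ⁅A, ⊤⁆) = ⊥ := (hG.to_quotient _).eq_bot_of_le_powOf <| by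
    rw [← map_powOf, Subgroup.map_le_map_iff, QuotientGroup.ker_mk']
    exact h
  rwa [Subgroup.map_eq_bot_iff, QuotientGroup.ker_mk'] at this

theorem IsPGroup.le_of_le_sup_powOf_sup_commutator [Finite G] (hG : IsPGroup p G)
    {A B : Subgroup G} [hA : A.Normal] [B.Normal] (h : A ≤ B ⊔ (powOf A p ⊔ ⁅A, ⊤⁆)) :
    A ≤ B := by
  have hπ := QuotientGroup.mk'_surjective B
  have := hA.map _ hπ
  have : A.map (QuotientGroup.mk' B) = ⊥ :=
    (hG.to_quotient B).eq_bot_of_le_powOf_sup_commutator <| by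
      rw [← map_powOf, ← Subgroup.map_top_of_surjective _ hπ, ← Subgroup.map_commutator,
        ← Subgroup.map_sup, Subgroup.map_le_map_iff, QuotientGroup.ker_mk', sup_comm]
      exact h
  rwa [Subgroup.map_eq_bot_iff, QuotientGroup.ker_mk'] at this

end PGroup

section CommutatorCalculus

variable {G : Type} [Group G]

theorem Nat.Prime.dvd_choose_two {p : ℕ} (hp : p.Prime) (hp2 : p ≠ 2) : p ∣ p.choose 2 :=
  hp.dvd_choose_self two_ne_zero (hp.two_le.lt_of_ne' hp2)

theorem Nat.succ_choose_two (n : ℕ) : (n + 1).choose 2 = n.choose 2 + n := by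
  rw [Nat.choose_succ_succ', Nat.choose_one_right, add_comm]

theorem mul_pow_of_commutatorElement_mem_center {x y : G} (hc : ⁅y, x⁆ ∈ Subgroup.center G)
    (n : ℕ) : (x * y) ^ n = ⁅y, x⁆ ^ n.choose 2 * x ^ n * y ^ n := by
  have hc' : ∀ g, Commute g ⁅y, x⁆ := Subgroup.mem_center_iff.mp hc
  have hyx : SemiconjBy y x (⁅y, x⁆ * x) := by
    rw [SemiconjBy, commutatorElement_def]; group
  induction n with
  | zero => simp
  | succ n ih =>
    have hyxn : y * x ^ n = ⁅y, x⁆ ^ n * x ^ n * y := by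
      rw [(hyx.pow_right n).eq, (hc' x).symm.mul_pow]
    calc (x * y) ^ (n + 1) = ⁅y, x⁆ ^ n.choose 2 * (x * (y * x ^ n) * y ^ n) := by
          rw [pow_succ', ih]
          simp only [mul_assoc, ((hc' _).pow_right _).left_comm]
      _ = ⁅y, x⁆ ^ (n + 1).choose 2 * x ^ (n + 1) * y ^ (n + 1) := by
          rw [hyxn, Nat.succ_choose_two, pow_add, pow_succ' x, pow_succ' y]
          simp only [mul_assoc, ((hc' x).pow_right n).left_comm]

theorem commutatorElement_pow_left_of_mem_center {x y : G}
    (he : ⁅x, ⁅x, y⁆⁆ ∈ Subgroup.center G) (n : ℕ) :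
    ⁅x ^ n, y⁆ = ⁅x, ⁅x, y⁆⁆ ^ n.choose 2 * ⁅x, y⁆ ^ n := by
  have he' : ∀ g, Commute g ⁅x, ⁅x, y⁆⁆ := Subgroup.mem_center_iff.mp he
  have hconj : x * ⁅x, y⁆ * x⁻¹ = ⁅x, ⁅x, y⁆⁆ * ⁅x, y⁆ := by
    rw [commutatorElement_def x ⁅x, y⁆]; group
  induction n with
  | zero => simp
  | succ n ih =>
    calc ⁅x ^ (n + 1), y⁆ = x * ⁅x ^ n, y⁆ * x⁻¹ * ⁅x, y⁆ := by
          simp only [pow_succ', commutatorElement_def]; group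
      _ = ⁅x, ⁅x, y⁆⁆ ^ n.choose 2 * (x * ⁅x, y⁆ * x⁻¹) ^ n * ⁅x, y⁆ := by
          rw [ih, conj_pow]
          simp only [mul_assoc, ((he' x).pow_right _).left_comm]
      _ = ⁅x, ⁅x, y⁆⁆ ^ (n + 1).choose 2 * ⁅x, y⁆ ^ (n + 1) := by
          rw [hconj, (he' _).symm.mul_pow, Nat.succ_choose_two, pow_add, pow_succ]
          simp only [mul_assoc]

theorem commutator_top_eq_bot_iff_le_center {H : Subgroup G} :
    ⁅H, (⊤ : Subgroup G)⁆ = ⊥ ↔ H ≤ Subgroup.center G := by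
  rw [Subgroup.commutator_eq_bot_iff_le_centralizer, Subgroup.coe_top, Subgroup.centralizer_univ]

theorem mk_mem_center_of_commutator_le {K L : Subgroup G} [L.Normal] (h : ⁅K, ⊤⁆ ≤ L) {x : G}
    (hx : x ∈ K) : (x : G ⧸ L) ∈ Subgroup.center (G ⧸ L) := by
  refine Subgroup.mem_center_iff.mpr fun z => ?_
  induction z using QuotientGroup.induction_on with
  | H z =>
    have : ⁅x, z⁆ ∈ L := h (Subgroup.commutator_mem_commutator hx (Subgroup.mem_top _))
    rw [← QuotientGroup.eq_one_iff, ← QuotientGroup.mk'_apply, map_commutatorElement,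
      commutatorElement_eq_one_iff_commute] at this
    exact this.symm.eq

theorem commutator_powOf_eq_bot {M : Subgroup G} {n : ℕ}
    (hc : ⁅⁅M, (⊤ : Subgroup G)⁆, (⊤ : Subgroup G)⁆ = ⊥)
    (hn : powOf ⁅M, (⊤ : Subgroup G)⁆ n = ⊥) : ⁅powOf M n, (⊤ : Subgroup G)⁆ = ⊥ := by
  have hcen := commutator_top_eq_bot_iff_le_center.mp hc
  rw [commutator_top_eq_bot_iff_le_center]
  refine powOf_le fun u hu => Subgroup.mem_center_iff.mpr fun g => ?_
  have hug : ⁅u, g⁆ ∈ ⁅M, (⊤ : Subgroup G)⁆ :=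
    Subgroup.commutator_mem_commutator hu (Subgroup.mem_top _)
  have he : ⁅u, ⁅u, g⁆⁆ = 1 :=
    commutatorElement_eq_one_iff_commute.mpr (Subgroup.mem_center_iff.mp (hcen hug) u)
  have hugn : ⁅u, g⁆ ^ n = 1 := by simpa [hn] using pow_mem_powOf hug n
  have := commutatorElement_pow_left_of_mem_center (he ▸ Subgroup.one_mem _) n
  rw [he, one_pow, one_mul, hugn, commutatorElement_eq_one_iff_commute] at this
  exact this.symm.eq

end CommutatorCalculus

section PowerfullyEmbedded

variable {G : Type} [Group G] {p : ℕ}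

/-- For `p = 2` this is `(N^2)^2`, which contains the `N^4` of the usual definition. -/
def powerfulPow (p : ℕ) (N : Subgroup G) : Subgroup G :=
  if p = 2 then powOf (powOf N p) p else powOf N p

def IsPowerfullyEmbedded (p : ℕ) (N : Subgroup G) : Prop :=
  ⁅N, ⊤⁆ ≤ powerfulPow p N

instance powerfulPow_normal (N : Subgroup G) [N.Normal] : (powerfulPow p N).Normal := by
  unfold powerfulPow; split_ifs <;> infer_instance

theorem map_powerfulPow {G' : Type} [Group G'] (f : G →* G') (N : Subgroup G) :
    (powerfulPow p N).map f = powerfulPow p (N.map f) := by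
  unfold powerfulPow; split_ifs <;> simp only [map_powOf]

theorem powerfulPow_le_powOf (N : Subgroup G) : powerfulPow p N ≤ powOf N p := by
  unfold powerfulPow; split_ifs
  · exact powOf_le_self _ _
  · exact le_rfl

theorem powOf_powerfulPow (N : Subgroup G) :
    powOf (powerfulPow p N) p = powerfulPow p (powOf N p) := by
  unfold powerfulPow; split_ifs <;> rfl

theorem pow_choose_two_mem_powOf_powOf [Fact p.Prime] {N : Subgroup G} {c : G}
    (hc : c ∈ powerfulPow p N) : c ^ p.choose 2 ∈ powOf (powOf N p) p := by
  unfold powerfulPow at hc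
  split_ifs at hc with hp2
  · subst hp2; simpa using hc
  · obtain ⟨k, hk⟩ := Nat.Prime.dvd_choose_two Fact.out hp2
    rw [hk, pow_mul]
    exact Subgroup.pow_mem _ (pow_mem_powOf hc p) k

theorem IsPowerfullyEmbedded.map {G' : Type} [Group G'] {N : Subgroup G}
    (hN : IsPowerfullyEmbedded p N) {f : G →* G'} (hf : Function.Surjective f) :
    IsPowerfullyEmbedded p (N.map f) := by
  unfold IsPowerfullyEmbedded
  rw [← Subgroup.map_top_of_surjective f hf, ← Subgroup.map_commutator, ← map_powerfulPow]
  exact Subgroup.map_mono hN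

theorem IsPowerful.isPowerfullyEmbedded_top (h : IsPowerful G p) :
    IsPowerfullyEmbedded p (⊤ : Subgroup G) := by
  unfold IsPowerful at h
  unfold IsPowerfullyEmbedded powerfulPow
  split_ifs at h ⊢ with hp2
  · subst hp2
    refine h.trans (powOf_le fun x _ => ?_)
    rw [show 4 = 2 * 2 from rfl, pow_mul]
    exact pow_mem_powOf (pow_mem_powOf (Subgroup.mem_top _) 2) 2
  · exact h

theorem IsPowerfullyEmbedded.commutator_powOf_eq_bot_of_eq_bot [Fact p.Prime] {N : Subgroup G}
    (hN : IsPowerfullyEmbedded p N) (hB : powerfulPow p (powOf N p) = ⊥)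
    (hA : powOf ⁅powOf N p, (⊤ : Subgroup G)⁆ p = ⊥)
    (hAc : ⁅⁅powOf N p, (⊤ : Subgroup G)⁆, (⊤ : Subgroup G)⁆ = ⊥) :
    ⁅powOf N p, (⊤ : Subgroup G)⁆ = ⊥ := by
  have hAcen := commutator_top_eq_bot_iff_le_center.mp hAc
  rw [commutator_top_eq_bot_iff_le_center]
  refine powOf_le fun x hx => Subgroup.mem_center_iff.mpr fun y => ?_
  have hc : ⁅x, y⁆ ∈ powerfulPow p N :=
    hN (Subgroup.commutator_mem_commutator hx (Subgroup.mem_top _))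
  have hcp : ⁅x, y⁆ ^ p = 1 := by
    simpa [powOf_powerfulPow, hB] using pow_mem_powOf hc p
  have he : ⁅x, ⁅x, y⁆⁆ ∈ ⁅powOf N p, (⊤ : Subgroup G)⁆ := by
    rw [← commutatorElement_inv]
    exact Subgroup.inv_mem _ (Subgroup.commutator_mem_commutator (powerfulPow_le_powOf N hc)
      (Subgroup.mem_top _))
  have hep : ⁅x, ⁅x, y⁆⁆ ^ p.choose 2 = 1 := by
    by_cases hp2 : p = 2
    · subst hp2
      rw [powerfulPow, if_pos rfl] at hc
      have := commutator_powOf_eq_bot hAc hA ▸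
        Subgroup.commutator_mem_commutator hc (Subgroup.mem_top x)
      rw [Subgroup.mem_bot, commutatorElement_eq_one_iff_commute] at this
      rw [commutatorElement_eq_one_iff_commute.mpr this.symm, one_pow]
    · obtain ⟨k, hk⟩ := Nat.Prime.dvd_choose_two Fact.out hp2
      have hep : ⁅x, ⁅x, y⁆⁆ ^ p = 1 := by simpa [hA] using pow_mem_powOf he p
      rw [hk, pow_mul, hep, one_pow]
  have := commutatorElement_pow_left_of_mem_center (hAcen he) p
  rw [hep, hcp, one_mul, commutatorElement_eq_one_iff_commute] at this
  exact this.symm.eq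

theorem isPowerfullyEmbedded_powOf [Finite G] [Fact p.Prime] (hG : IsPGroup p G)
    {N : Subgroup G} [N.Normal] (hN : IsPowerfullyEmbedded p N) :
    IsPowerfullyEmbedded p (powOf N p) := by
  induction h : Nat.card G using Nat.strong_induction_on generalizing G with
  | _ n ih =>
    set A := ⁅powOf N p, (⊤ : Subgroup G)⁆
    set L := powerfulPow p (powOf N p) ⊔ (powOf A p ⊔ ⁅A, ⊤⁆)
    by_cases hL : L = ⊥
    · obtain ⟨hB, hK⟩ := sup_eq_bot_iff.mp hL
      obtain ⟨hAp, hAc⟩ := sup_eq_bot_iff.mp hK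
      exact (IsPowerfullyEmbedded.commutator_powOf_eq_bot_of_eq_bot hN hB hAp hAc).le.trans
        bot_le
    · have hπ := QuotientGroup.mk'_surjective L
      have := ‹N.Normal›.map _ hπ
      have hquot := ih _ (h ▸ card_quotient_lt_card hL) (hG.to_quotient L) (hN.map hπ) rfl
      have hAB : A ≤ powerfulPow p (powOf N p) ⊔ L := by
        rw [← QuotientGroup.ker_mk' L, ← Subgroup.map_le_map_iff, Subgroup.map_commutator,
          map_powOf, map_powerfulPow, map_powOf, Subgroup.map_top_of_surjective _ hπ]
        exact hquot
      exact hG.le_of_le_sup_powOf_sup_commutator (by rwa [← sup_assoc, sup_idem] at hAB)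

end PowerfullyEmbedded

section PowerMap

variable {G : Type} [Group G] {p : ℕ} [Fact p.Prime] [Finite G]

theorem IsPowerfullyEmbedded.commutator_powerfulPow_le (hG : IsPGroup p G)
    {N : Subgroup G} [N.Normal] (hN : IsPowerfullyEmbedded p N) :
    ⁅powerfulPow p N, (⊤ : Subgroup G)⁆ ≤ powOf (powOf N p) p := by
  by_cases hp2 : p = 2
  · rw [powerfulPow, if_pos hp2]
    exact Subgroup.commutator_le_left _ _
  · have := isPowerfullyEmbedded_powOf hG hN
    simpa only [IsPowerfullyEmbedded, powerfulPow, if_neg hp2] using this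

theorem IsPowerfullyEmbedded.mk_mul_pow (hG : IsPGroup p G) {N : Subgroup G} [N.Normal]
    (hN : IsPowerfullyEmbedded p N) (u : G) {w : G} (hw : w ∈ N) :
    (((u * w) ^ p : G) : G ⧸ powOf (powOf N p) p) =
      ((u ^ p : G) : G ⧸ powOf (powOf N p) p) * ((w ^ p : G) : G ⧸ powOf (powOf N p) p) := by
  have hc : ⁅w, u⁆ ∈ powerfulPow p N :=
    hN (Subgroup.commutator_mem_commutator hw (Subgroup.mem_top u))
  have hcen := mk_mem_center_of_commutator_le (hN.commutator_powerfulPow_le hG) hc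
  have hcC : ((⁅w, u⁆ ^ p.choose 2 : G) : G ⧸ powOf (powOf N p) p) = 1 :=
    (QuotientGroup.eq_one_iff _).mpr (pow_choose_two_mem_powOf_powOf hc)
  rw [← QuotientGroup.mk'_apply, map_commutatorElement] at hcen
  rw [QuotientGroup.mk_pow, ← QuotientGroup.mk'_apply, map_commutatorElement] at hcC
  simp only [QuotientGroup.mk_pow, QuotientGroup.mk_mul, QuotientGroup.mk'_apply] at hcC hcen ⊢
  rw [mul_pow_of_commutatorElement_mem_center hcen, hcC, one_mul]

def IsPowerfullyEmbedded.powHom (hG : IsPGroup p G) {N : Subgroup G} [N.Normal]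
    (hN : IsPowerfullyEmbedded p N) : N →* G ⧸ powOf (powOf N p) p where
  toFun u := ((u ^ p : G) : G ⧸ powOf (powOf N p) p)
  map_one' := by simp
  map_mul' u w := hN.mk_mul_pow hG u w.2

end PowerMap

section CentralProducts

variable {Q : Type} [Group Q]

theorem List.prod_map_mul_of_mem_center {ι : Type} (l : List ι) (f g : ι → Q)
    (hg : ∀ i, g i ∈ Subgroup.center Q) :
    (l.map fun i => f i * g i).prod = (l.map f).prod * (l.map g).prod := by
  induction l with
  | nil => simp
  | cons a l ih =>
    simp only [List.map_cons, List.prod_cons, ih]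
    rw [mul_assoc, mul_assoc, ← mul_assoc (l.map f).prod, Subgroup.mem_center_iff.mp (hg a),
      mul_assoc]

open scoped IsMulCommutative in
theorem exists_eq_prod_zpow_of_mem_closure_range {d : ℕ} {b : Fin d → Q}
    (hb : ∀ i, b i ∈ Subgroup.center Q) {x : Q} (hx : x ∈ Subgroup.closure (Set.range b)) :
    ∃ m : Fin d → ℤ, x = ((List.finRange d).map fun i => b i ^ m i).prod := by
  let b' : Fin d → Subgroup.center Q := fun i => ⟨b i, hb i⟩
  have hmap : Subgroup.closure (Set.range b) =
      (Subgroup.closure (Set.range b')).map (Subgroup.center Q).subtype := by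
    rw [MonoidHom.map_closure, ← Set.range_comp]
    rfl
  rw [hmap] at hx
  obtain ⟨y, hy, rfl⟩ := hx
  obtain ⟨m, rfl⟩ := Subgroup.mem_closure_range_iff_of_fintype.mp hy
  refine ⟨m, ?_⟩
  rw [Fin.prod_univ_def, map_list_prod, List.map_map]
  rfl

end CentralProducts

section PowOfSeries

variable (G : Type) [Group G] (p : ℕ)

def powOfSeries : ℕ → Subgroup G
  | 0 => ⊤
  | k + 1 => powOf (powOfSeries k) p

instance powOfSeries_normal (k : ℕ) : (powOfSeries G p k).Normal := by
  induction k with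
  | zero => exact Subgroup.normal_of_characteristic ⊤
  | succ k ih => exact powOf_normal _ _

variable {G p}

theorem powOfSeries_succ_le (k : ℕ) : powOfSeries G p (k + 1) ≤ powOfSeries G p k :=
  powOf_le_self _ _

theorem pow_pow_mem_powOfSeries (x : G) (k : ℕ) : x ^ p ^ k ∈ powOfSeries G p k := by
  induction k with
  | zero => exact Subgroup.mem_top _
  | succ k ih =>
    rw [pow_succ, pow_mul]
    exact pow_mem_powOf ih p

variable [Finite G] [Fact p.Prime]

theorem exists_powOfSeries_eq_bot (hG : IsPGroup p G) : ∃ k, powOfSeries G p k = ⊥ := by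
  obtain ⟨k, hk⟩ := WellFoundedLT.antitone_chain_condition
    (antitone_nat_of_succ_le (powOfSeries_succ_le (G := G) (p := p)))
  exact ⟨k, hG.eq_bot_of_le_powOf (hk (k + 1) k.le_succ).le⟩

theorem IsPowerful.isPowerfullyEmbedded_powOfSeries (hG : IsPGroup p G)
    (hpow : IsPowerful G p) (k : ℕ) : IsPowerfullyEmbedded p (powOfSeries G p k) := by
  induction k with
  | zero => exact hpow.isPowerfullyEmbedded_top
  | succ k ih => exact isPowerfullyEmbedded_powOf hG ih

theorem IsPowerful.commutator_powOfSeries_le (hG : IsPGroup p G) (hpow : IsPowerful G p)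
    (k : ℕ) : ⁅powOfSeries G p k, (⊤ : Subgroup G)⁆ ≤ powOfSeries G p (k + 1) :=
  (hpow.isPowerfullyEmbedded_powOfSeries hG k).trans (powerfulPow_le_powOf _)

end PowOfSeries

section Generation

variable {G : Type} [Group G] [Finite G] {p : ℕ} [Fact p.Prime] {d : ℕ} {xs : Fin d → G}

/-- The `p`-power homomorphism `powOfSeries G p k → G ⧸ powOfSeries G p (k + 2)` kills
`powOfSeries G p (k + 1)`, so it carries generators of level `k` to generators of level `k + 1`. -/
theorem IsPowerful.mk_mem_closure_range_pow_pow (hG : IsPGroup p G) (hpow : IsPowerful G p)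
    (hgen : Subgroup.closure (Set.range xs) = ⊤) (k : ℕ) {u : G}
    (hu : u ∈ powOfSeries G p k) : (u : G ⧸ powOfSeries G p (k + 1)) ∈
      Subgroup.closure (Set.range fun i => ((xs i ^ p ^ k : G) : G ⧸ powOfSeries G p (k + 1))) := by
  induction k generalizing u with
  | zero =>
    have := Subgroup.mem_map_of_mem (QuotientGroup.mk' (powOfSeries G p 1))
      (hgen ▸ Subgroup.mem_top u : u ∈ Subgroup.closure (Set.range xs))
    rw [MonoidHom.map_closure, ← Set.range_comp] at this
    simpa [Function.comp_def] using this
  | succ k ih =>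
    set V := powOfSeries G p
    set S := Subgroup.closure (Set.range fun i => ((xs i ^ p ^ (k + 1) : G) : G ⧸ V (k + 2)))
    let φ : V k →* G ⧸ V (k + 2) := (hpow.isPowerfullyEmbedded_powOfSeries hG k).powHom hG
    let ψ := (QuotientGroup.mk' (V (k + 1))).comp (V k).subtype
    let C := Subgroup.closure
      (Set.range fun i => (⟨xs i ^ p ^ k, pow_pow_mem_powOfSeries _ k⟩ : V k))
    have hCφ : C ≤ S.comap φ := by
      refine (Subgroup.closure_le _).mpr ?_
      rintro _ ⟨i, rfl⟩
      refine Subgroup.subset_closure ⟨i, ?_⟩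
      show _ = (((xs i ^ p ^ k) ^ p : G) : G ⧸ V (k + 2))
      rw [← pow_mul, ← pow_succ]
    have hkerφ : ψ.ker ≤ S.comap φ := by
      intro v hv
      have hv' : (v : G) ∈ V (k + 1) := (QuotientGroup.eq_one_iff _).mp hv
      have : φ v = 1 := (QuotientGroup.eq_one_iff _).mpr (pow_mem_powOf hv' p)
      rw [Subgroup.mem_comap, this]
      exact S.one_mem
    refine powOf_le (K := S.comap (QuotientGroup.mk' (V (k + 2)))) (fun u hu => ?_) hu
    have : ψ ⟨u, hu⟩ ∈ C.map ψ := by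
      rw [MonoidHom.map_closure, ← Set.range_comp]
      exact ih hu
    rw [← Subgroup.mem_comap, Subgroup.comap_map_eq] at this
    exact sup_le hCφ hkerφ this

theorem IsPowerful.exists_prod_zpow_inv_mul_mem (hG : IsPGroup p G) (hpow : IsPowerful G p)
    (hgen : Subgroup.closure (Set.range xs) = ⊤) (k : ℕ) {w : G}
    (hw : w ∈ powOfSeries G p k) : ∃ m : Fin d → ℤ,
      ((List.finRange d).map fun i => (xs i ^ p ^ k) ^ m i).prod⁻¹ * w ∈
        powOfSeries G p (k + 1) := by
  have hcen i : ((xs i ^ p ^ k : G) : G ⧸ powOfSeries G p (k + 1)) ∈ Subgroup.center _ :=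
    mk_mem_center_of_commutator_le (hpow.commutator_powOfSeries_le hG k)
      (pow_pow_mem_powOfSeries _ k)
  obtain ⟨m, hm⟩ := exists_eq_prod_zpow_of_mem_closure_range hcen
    (hpow.mk_mem_closure_range_pow_pow hG hgen k hw)
  refine ⟨m, QuotientGroup.eq.mp ?_⟩
  rw [hm, ← QuotientGroup.mk'_apply, map_list_prod, List.map_map]
  simp [Function.comp_def]

theorem IsPowerful.exists_prod_zpow_inv_mul_mem_powOfSeries (hG : IsPGroup p G)
    (hpow : IsPowerful G p) (hgen : Subgroup.closure (Set.range xs) = ⊤) (k : ℕ) (g : G) :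
    ∃ n : Fin d → ℤ,
      ((List.finRange d).map fun i => xs i ^ n i).prod⁻¹ * g ∈ powOfSeries G p k := by
  induction k with
  | zero => exact ⟨0, Subgroup.mem_top _⟩
  | succ k ih =>
    obtain ⟨n, hn⟩ := ih
    obtain ⟨m, hm⟩ := hpow.exists_prod_zpow_inv_mul_mem hG hgen k hn
    refine ⟨fun i => n i + (p ^ k : ℕ) * m i, QuotientGroup.eq.mp ?_⟩
    set π := QuotientGroup.mk' (powOfSeries G p (k + 1))
    -- the correction factors are central modulo the next term, so they merge into exponents
    have hcen i : π ((xs i ^ p ^ k) ^ m i) ∈ Subgroup.center _ :=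
      mk_mem_center_of_commutator_le (hpow.commutator_powOfSeries_le hG k)
        (Subgroup.zpow_mem _ (pow_pow_mem_powOfSeries _ k) _)
    have hπ (f : Fin d → G) :
        π ((List.finRange d).map f).prod = ((List.finRange d).map fun i => π (f i)).prod := by
      rw [map_list_prod, List.map_map]
      rfl
    have hsplit : ((List.finRange d).map fun i => xs i ^ (n i + (p ^ k : ℕ) * m i)).prod =
        ((List.finRange d).map fun i => xs i ^ n i * (xs i ^ p ^ k) ^ m i).prod :=
      congrArg List.prod
        (List.map_congr_left fun i _ => by rw [zpow_add, zpow_mul, zpow_natCast])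
    have hm' := QuotientGroup.eq.mpr hm
    rw [QuotientGroup.mk_mul, QuotientGroup.mk_inv, eq_inv_mul_iff_mul_eq] at hm'
    change π _ * π _ = π _ at hm'
    change π ((List.finRange d).map fun i => xs i ^ (n i + (p ^ k : ℕ) * m i)).prod = π g
    rw [hsplit, hπ]
    simp only [map_mul]
    rw [List.prod_map_mul_of_mem_center _ _ _ hcen, ← hπ, ← hπ, hm']

end Generation

theorem card_le_pow_of_forall_eq_prod_zpow {G : Type} [Group G] {d e : ℕ} (he : 0 < e)
    (hexp : ∀ x : G, x ^ e = 1) {c : Fin d → G}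
    (hc : ∀ g : G, ∃ k : Fin d → ℤ, g = ((List.finRange d).map fun i => c i ^ k i).prod) :
    Nat.card G ≤ e ^ d := by
  have : NeZero e := ⟨he.ne'⟩
  have hsurj : Function.Surjective
      fun t : Fin d → ZMod e => ((List.finRange d).map fun i => c i ^ (t i).val).prod := by
    intro g
    obtain ⟨k, rfl⟩ := hc g
    refine ⟨fun i => k i, congrArg List.prod (List.map_congr_left fun i _ => ?_)⟩
    rw [zpow_eq_zpow_emod' (k i) (hexp (c i)), ← ZMod.val_intCast, zpow_natCast]
  simpa using Nat.card_le_card_of_surjective _ hsurj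

/-- a powerful finite `p`-group generated by `d` elements is a product of
at most `d` cyclic subgroups; in particular if it has exponent dividing `e` then
`|P| ≤ e^d`. -/
theorem powerful_product_of_cyclic
    (p : ℕ) (hp : p.Prime) (P : Type) [Group P] [Finite P]
    (hP : IsPGroup p P) (hpow : IsPowerful P p)
    (d : ℕ) (xs : Fin d → P) (hgen : Subgroup.closure (Set.range xs) = ⊤) :
    (∃ c : Fin d → P, ∀ g : P, ∃ k : Fin d → ℤ,
        g = ((List.finRange d).map (fun i => c i ^ k i)).prod) ∧
    (∀ e : ℕ, 0 < e → (∀ x : P, x ^ e = 1) → Nat.card P ≤ e ^ d) := by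
  have : Fact p.Prime := ⟨hp⟩
  obtain ⟨K, hK⟩ := exists_powOfSeries_eq_bot hP
  have hprod : ∀ g : P, ∃ k : Fin d → ℤ,
      g = ((List.finRange d).map (fun i => xs i ^ k i)).prod := by
    intro g
    obtain ⟨k, hk⟩ := hpow.exists_prod_zpow_inv_mul_mem_powOfSeries hP hgen K g
    rw [hK, Subgroup.mem_bot, inv_mul_eq_one] at hk
    exact ⟨k, hk.symm⟩
  exact ⟨⟨xs, hprod⟩, fun e he hexp => card_le_pow_of_forall_eq_prod_zpow he hexp hprod⟩
end

section
/- Let G be a group with an N-series G = G₁ ≥ G₂ ≥ ⋯ (meaning [G_i, G_j] ≤ G_{i+j} for all i, j). Then the direct sum L = ⊕ G_i/G_{i+1}, with bracket induced by [xG_{i+1}, yG_{j+1}] = [x,y]G_{i+j+1} on homogeneous components, is a well-defined Lie ring. -/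
open scoped commutatorElement

/-- A witness that the direct sum `⊕ G_i/G_{i+1}` associated to an `N`-series `(Gs i)`
carries a well-defined Lie ring structure: a Lie ring `L` together with group
homomorphisms `φ i : G_i →* L` (written multiplicatively) whose kernel is exactly
`G_{i+1}`, whose homogeneous components generate `L` additively and independently
(direct sum), and whose bracket is induced by group commutation. -/
structure AssociatedLieRing (G : Type) [Group G] (Gs : ℕ → Subgroup G)
    (hcomm : ∀ i j, 1 ≤ i → 1 ≤ j → ∀ x ∈ Gs i, ∀ y ∈ Gs j, ⁅x, y⁆ ∈ Gs (i + j)) where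
  L : Type
  [instL : LieRing L]
  φ : (i : ℕ) → ↥(Gs i) →* Multiplicative L
  ker_eq : ∀ i, 1 ≤ i → ∀ x : ↥(Gs i), φ i x = 1 ↔ (x : G) ∈ Gs (i + 1)
  bracket_eq : ∀ i j (hi : 1 ≤ i) (hj : 1 ≤ j) (x : ↥(Gs i)) (y : ↥(Gs j)),
    Multiplicative.toAdd (φ (i + j) ⟨⁅(x : G), (y : G)⁆, hcomm i j hi hj x x.2 y y.2⟩) =
      ⁅Multiplicative.toAdd (φ i x), Multiplicative.toAdd (φ j y)⁆
  generates : AddSubgroup.closure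
      (⋃ i ∈ {i : ℕ | 1 ≤ i},
        Set.range fun x : ↥(Gs i) => Multiplicative.toAdd (φ i x)) = ⊤
  indep : iSupIndep fun i : {i : ℕ // 1 ≤ i} =>
      AddSubgroup.closure
        (Set.range fun x : ↥(Gs (i : ℕ)) => Multiplicative.toAdd (φ i x))

/-!
Modulo `G_{n+1}` every element of `G_n` is central, since `⁅G, G_n⁆ ≤ G_{n+1}`. Hence the
commutator map `G_i × G_j → G_{i+j}/G_{i+j+1}` is multiplicative in each variable and kills
`G_{i+1}` and `G_{j+1}`, so it descends to a biadditive bracket on `L = ⨁ G_n/G_{n+1}`.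
Antisymmetry is `⁅x, y⁆⁻¹ = ⁅y, x⁆`. For the Jacobi identity, the three factors of the Hall–Witt
identity for `x ∈ G_i`, `y ∈ G_j`, `z ∈ G_k` lie in `G_{i+j+k}`, where they represent the three
cyclic double brackets; their product is `1`, so the brackets sum to `0`.
-/

open scoped DirectSum

theorem commutatorElement_hallWitt {G : Type*} [Group G] (x y z : G) :
    y * ⁅⁅y⁻¹, x⁆, z⁆ * y⁻¹ * (z * ⁅⁅z⁻¹, y⁆, x⁆ * z⁻¹) * (x * ⁅⁅x⁻¹, z⁆, y⁆ * x⁻¹) = 1 := by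
  group

theorem DirectSum.iSupIndep_range_of {ι : Type*} [DecidableEq ι] {β : ι → Type*}
    [∀ i, AddCommGroup (β i)] : iSupIndep fun i => (DirectSum.of β i).range := by
  intro i
  rw [AddSubgroup.disjoint_def]
  rintro _ ⟨b, rfl⟩ hb
  have hle : (⨆ (j) (_ : j ≠ i), (DirectSum.of β j).range) ≤
      (DFinsupp.evalAddMonoidHom (β := β) i).ker :=
    iSup₂_le fun j hj => by
      rintro _ ⟨c, rfl⟩
      exact DirectSum.of_eq_of_ne _ _ _ hj.symm
  have hb0 := hle hb
  change (DirectSum.of β i b) i = 0 at hb0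
  rw [DirectSum.of_eq_same] at hb0
  rw [hb0, map_zero]

structure NSeries (G : Type*) [Group G] where
  Gs : ℕ → Subgroup G
  Gs_one : Gs 1 = ⊤
  Gs_succ_le : ∀ i, 1 ≤ i → Gs (i + 1) ≤ Gs i
  commutator_le_of_one_le : ∀ i j, 1 ≤ i → 1 ≤ j → ⁅Gs i, Gs j⁆ ≤ Gs (i + j)

namespace NSeries

variable {G : Type*} [Group G] (S : NSeries G)

theorem commutator_mem_succ {n : ℕ} {x : G} (hx : x ∈ S.Gs n) (g : G) :
    ⁅g, x⁆ ∈ S.Gs (n + 1) := by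
  rcases Nat.eq_zero_or_pos n with rfl | hn
  · simp [S.Gs_one]
  · rw [Nat.add_comm]
    exact S.commutator_le_of_one_le 1 n le_rfl hn
      (Subgroup.commutator_mem_commutator (S.Gs_one ▸ Subgroup.mem_top g) hx)

theorem Gs_normal {n : ℕ} (hn : 1 ≤ n) : (S.Gs n).Normal where
  conj_mem x hx g := by
    rw [show g * x * g⁻¹ = ⁅g, x⁆ * x by group]
    exact mul_mem (S.Gs_succ_le n hn (S.commutator_mem_succ hx g)) hx

instance (n : ℕ) : (S.Gs (n + 1)).Normal := S.Gs_normal n.succ_pos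

theorem commutator_le (i j : ℕ) : ⁅S.Gs i, S.Gs j⁆ ≤ S.Gs (i + j) := by
  rcases Nat.eq_zero_or_pos i with rfl | hi <;> rcases Nat.eq_zero_or_pos j with rfl | hj
  · exact Subgroup.commutator_le_self _
  · have := S.Gs_normal hj
    simpa using Subgroup.commutator_le_right (S.Gs 0) (S.Gs j)
  · have := S.Gs_normal hi
    simpa using Subgroup.commutator_le_left (S.Gs i) (S.Gs 0)
  · exact S.commutator_le_of_one_le i j hi hj

theorem commutator_mem {i j : ℕ} {x y : G} (hx : x ∈ S.Gs i) (hy : y ∈ S.Gs j) :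
    ⁅x, y⁆ ∈ S.Gs (i + j) :=
  S.commutator_le i j (Subgroup.commutator_mem_commutator hx hy)

theorem mk_conj {n : ℕ} {x : G} (hx : x ∈ S.Gs n) (g : G) :
    ((g * x * g⁻¹ : G) : G ⧸ S.Gs (n + 1)) = x := by
  rw [QuotientGroup.eq, show (g * x * g⁻¹)⁻¹ * x = ⁅g, x⁻¹⁆ by group]
  exact S.commutator_mem_succ (inv_mem hx) g

instance (n : ℕ) : ((S.Gs (n + 1)).subgroupOf (S.Gs n)).Normal :=
  Subgroup.Normal.subgroupOf inferInstance _

abbrev Component (n : ℕ) : Type _ := S.Gs n ⧸ (S.Gs (n + 1)).subgroupOf (S.Gs n)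

instance (n : ℕ) : CommGroup (S.Component n) where
  mul_comm a b := by
    induction a using QuotientGroup.induction_on with | H x =>
    induction b using QuotientGroup.induction_on with | H y =>
    rw [← QuotientGroup.mk_mul, ← QuotientGroup.mk_mul, QuotientGroup.eq,
      Subgroup.mem_subgroupOf, show ((x * y)⁻¹ * (y * x) : S.Gs n) = ⁅y⁻¹, x⁻¹⁆ by group]
    exact S.commutator_mem_succ (inv_mem x.2) _

/-- `Gs 0` is unconstrained, but the degree-`0` summand is trivial because `Gs 1 = ⊤`
(see `of_zero`). -/
abbrev L : Type _ := ⨁ n, Additive (S.Component n)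

def of (n : ℕ) (g : G) (hg : g ∈ S.Gs n) : S.L :=
  DirectSum.of _ n (Additive.ofMul (QuotientGroup.mk ⟨g, hg⟩))

theorem of_eq_of_iff {n : ℕ} {a b : G} (ha : a ∈ S.Gs n) (hb : b ∈ S.Gs n) :
    S.of n a ha = S.of n b hb ↔ (a : G ⧸ S.Gs (n + 1)) = b := by
  rw [of, of, (DirectSum.of_injective n).eq_iff, EmbeddingLike.apply_eq_iff_eq, QuotientGroup.eq,
    Subgroup.mem_subgroupOf, QuotientGroup.eq]
  rfl

theorem of_mul {n : ℕ} {a b : G} (ha : a ∈ S.Gs n) (hb : b ∈ S.Gs n) :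
    S.of n (a * b) (mul_mem ha hb) = S.of n a ha + S.of n b hb := by
  rw [of, of, of, ← map_add]
  rfl

theorem of_one (n : ℕ) : S.of n 1 (one_mem _) = 0 := map_zero _

theorem of_inv {n : ℕ} {a : G} (ha : a ∈ S.Gs n) : S.of n a⁻¹ (inv_mem ha) = -S.of n a ha := by
  rw [of, of, ← map_neg]
  rfl

theorem of_eq_zero_iff {n : ℕ} {a : G} (ha : a ∈ S.Gs n) : S.of n a ha = 0 ↔ a ∈ S.Gs (n + 1) := by
  rw [← S.of_one n, of_eq_of_iff, QuotientGroup.mk_one, QuotientGroup.eq_one_iff]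

theorem of_zero {a : G} (ha : a ∈ S.Gs 0) : S.of 0 a ha = 0 :=
  (S.of_eq_zero_iff ha).2 (S.Gs_one ▸ Subgroup.mem_top a)

theorem of_congr {n m : ℕ} (h : n = m) {a : G} (ha : a ∈ S.Gs n) (ha' : a ∈ S.Gs m) :
    S.of n a ha = S.of m a ha' := by
  subst h; rfl

theorem of_conj {n : ℕ} {a : G} (ha : a ∈ S.Gs n) (g : G) (hga : g * a * g⁻¹ ∈ S.Gs n) :
    S.of n (g * a * g⁻¹) hga = S.of n a ha :=
  (S.of_eq_of_iff _ _).2 (S.mk_conj ha g)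

theorem induction_on {motive : S.L → Prop} (a : S.L) (zero : motive 0)
    (of : ∀ n, 1 ≤ n → ∀ g (hg : g ∈ S.Gs n), motive (S.of n g hg))
    (add : ∀ a b, motive a → motive b → motive (a + b)) : motive a := by
  induction a using DirectSum.induction_on with
  | zero => exact zero
  | add a b ha hb => exact add a b ha hb
  | of n q =>
    induction q using QuotientGroup.induction_on with | H x =>
    rcases Nat.eq_zero_or_pos n with rfl | hn
    · change motive (S.of 0 x x.2)
      rwa [S.of_zero]
    · exact of n hn x x.2

theorem hom_ext {M : Type*} [AddZeroClass M] {f f' : S.L →+ M}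
    (h : ∀ n g (hg : g ∈ S.Gs n), f (S.of n g hg) = f' (S.of n g hg)) : f = f' :=
  DirectSum.addHom_ext fun n q => by
    induction q using QuotientGroup.induction_on with | H x => exact h n x x.2

section Lift

variable {M : Type*} [AddCommGroup M] (f : ∀ n, S.Gs n → M)
  (map_mul : ∀ n x y, f n (x * y) = f n x + f n y)
  (map_succ : ∀ n (x : S.Gs n), (x : G) ∈ S.Gs (n + 1) → f n x = 0)

def lift : S.L →+ M :=
  DirectSum.toAddMonoid fun n => MonoidHom.toAdditiveLeft <|
    QuotientGroup.lift _ (MonoidHom.mk' (fun x => Multiplicative.ofAdd (f n x)) (map_mul n))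
      fun x hx => congrArg Multiplicative.ofAdd (map_succ n x hx)

theorem lift_of {n : ℕ} {g : G} (hg : g ∈ S.Gs n) :
    S.lift f map_mul map_succ (S.of n g hg) = f n ⟨g, hg⟩ :=
  DirectSum.toAddMonoid_of _ _ _

end Lift

theorem of_commutator_mul_left {i j : ℕ} {x₁ x₂ y : G} (hx₁ : x₁ ∈ S.Gs i) (hx₂ : x₂ ∈ S.Gs i)
    (hy : y ∈ S.Gs j) :
    S.of (i + j) ⁅x₁ * x₂, y⁆ (S.commutator_mem (mul_mem hx₁ hx₂) hy) =
      S.of (i + j) ⁅x₁, y⁆ (S.commutator_mem hx₁ hy) +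
        S.of (i + j) ⁅x₂, y⁆ (S.commutator_mem hx₂ hy) := by
  rw [add_comm (S.of _ _ _), ← of_mul, of_eq_of_iff,
    show ⁅x₁ * x₂, y⁆ = x₁ * ⁅x₂, y⁆ * x₁⁻¹ * ⁅x₁, y⁆ by group,
    QuotientGroup.mk_mul, S.mk_conj (S.commutator_mem hx₂ hy), ← QuotientGroup.mk_mul]

theorem of_commutator_mul_right {i j : ℕ} {x y₁ y₂ : G} (hx : x ∈ S.Gs i) (hy₁ : y₁ ∈ S.Gs j)
    (hy₂ : y₂ ∈ S.Gs j) :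
    S.of (i + j) ⁅x, y₁ * y₂⁆ (S.commutator_mem hx (mul_mem hy₁ hy₂)) =
      S.of (i + j) ⁅x, y₁⁆ (S.commutator_mem hx hy₁) +
        S.of (i + j) ⁅x, y₂⁆ (S.commutator_mem hx hy₂) := by
  rw [← of_mul, of_eq_of_iff, show ⁅x, y₁ * y₂⁆ = ⁅x, y₁⁆ * (y₁ * ⁅x, y₂⁆ * y₁⁻¹) by group,
    QuotientGroup.mk_mul, S.mk_conj (S.commutator_mem hx hy₂), ← QuotientGroup.mk_mul]

theorem of_commutator_eq_zero_of_mem_succ_left {i j : ℕ} {x y : G} (hx : x ∈ S.Gs (i + 1))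
    (hy : y ∈ S.Gs j) (hxy : ⁅x, y⁆ ∈ S.Gs (i + j)) : S.of (i + j) ⁅x, y⁆ hxy = 0 :=
  (S.of_eq_zero_iff hxy).2 (Nat.add_right_comm i 1 j ▸ S.commutator_mem hx hy)

theorem of_commutator_eq_zero_of_mem_succ_right {i j : ℕ} {x y : G} (hx : x ∈ S.Gs i)
    (hy : y ∈ S.Gs (j + 1)) (hxy : ⁅x, y⁆ ∈ S.Gs (i + j)) : S.of (i + j) ⁅x, y⁆ hxy = 0 :=
  (S.of_eq_zero_iff hxy).2 (S.commutator_mem (j := j + 1) hx hy)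

def bracket : S.L →+ S.L →+ S.L :=
  S.lift
    (fun i x => S.lift (fun j y => S.of (i + j) ⁅(x : G), y⁆ (S.commutator_mem x.2 y.2))
      (fun _ y₁ y₂ => S.of_commutator_mul_right x.2 y₁.2 y₂.2)
      (fun j y hy => S.of_commutator_eq_zero_of_mem_succ_right (i := i) (j := j) x.2 hy _))
    (fun _ x₁ x₂ => S.hom_ext fun _ y hy => by
      simp only [AddMonoidHom.add_apply, lift_of]
      exact S.of_commutator_mul_left x₁.2 x₂.2 hy)
    (fun _ x hx => S.hom_ext fun _ y hy => by
      rw [lift_of, AddMonoidHom.zero_apply]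
      exact S.of_commutator_eq_zero_of_mem_succ_left hx hy _)

theorem bracket_of_of {i j : ℕ} {x y : G} (hx : x ∈ S.Gs i) (hy : y ∈ S.Gs j) :
    S.bracket (S.of i x hx) (S.of j y hy) = S.of (i + j) ⁅x, y⁆ (S.commutator_mem hx hy) := by
  rw [bracket, lift_of, lift_of]

theorem bracket_flip : S.bracket.flip = -S.bracket := by
  refine S.hom_ext fun i x hx => S.hom_ext fun j y hy => ?_
  rw [AddMonoidHom.neg_apply, AddMonoidHom.neg_apply, AddMonoidHom.flip_apply, bracket_of_of,
    bracket_of_of, ← of_inv, S.of_congr (add_comm j i) _ (add_comm j i ▸ S.commutator_mem hy hx),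
    of_eq_of_iff, commutatorElement_inv]

theorem bracket_comm (a b : S.L) : S.bracket a b = -S.bracket b a := by
  rw [← AddMonoidHom.flip_apply, bracket_flip, AddMonoidHom.neg_apply, AddMonoidHom.neg_apply]

theorem bracket_self (a : S.L) : S.bracket a a = 0 := by
  induction a using S.induction_on with
  | zero => simp
  | of n _ g hg => rw [bracket_of_of, of_eq_zero_iff, commutatorElement_self]; exact one_mem _
  | add a b ha hb =>
    simp only [map_add, AddMonoidHom.add_apply, ha, hb, S.bracket_comm b a]
    abel

theorem bracket_bracket_of {i j k n : ℕ} {x y z : G} (hx : x ∈ S.Gs i) (hy : y ∈ S.Gs j)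
    (hz : z ∈ S.Gs k) (hn : i + j + k = n) (h : y * ⁅⁅y⁻¹, x⁆, z⁆ * y⁻¹ ∈ S.Gs n) :
    S.bracket (S.bracket (S.of i x hx) (S.of j y hy)) (S.of k z hz) =
      S.of n (y * ⁅⁅y⁻¹, x⁆, z⁆ * y⁻¹) h := by
  have hyx : ⁅y⁻¹, x⁆ ∈ S.Gs (i + j) := add_comm j i ▸ S.commutator_mem (inv_mem hy) hx
  have hxy : ((⁅x, y⁆ : G) : G ⧸ S.Gs (i + j + 1)) = ⁅y⁻¹, x⁆ := by
    rw [commutatorElement_inv_left, ← S.mk_conj (S.commutator_mem hx hy) y⁻¹, inv_inv]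
  rw [bracket_of_of, (S.of_eq_of_iff _ hyx).2 hxy, bracket_of_of,
    S.of_conj (hn ▸ S.commutator_mem hyx hz), S.of_congr hn]

theorem jacobi_of {i j k : ℕ} (hi : 1 ≤ i) (hj : 1 ≤ j) (hk : 1 ≤ k) {x y z : G}
    (hx : x ∈ S.Gs i) (hy : y ∈ S.Gs j) (hz : z ∈ S.Gs k) :
    S.bracket (S.bracket (S.of i x hx) (S.of j y hy)) (S.of k z hz) +
      S.bracket (S.bracket (S.of j y hy) (S.of k z hz)) (S.of i x hx) +
        S.bracket (S.bracket (S.of k z hz) (S.of i x hx)) (S.of j y hy) = 0 := by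
  have hn : (S.Gs (i + j + k)).Normal := S.Gs_normal (by omega)
  have mem {a b c : G} {p q r : ℕ} (ha : a ∈ S.Gs p) (hb : b ∈ S.Gs q) (hc : c ∈ S.Gs r)
      (h : p + q + r = i + j + k) : b * ⁅⁅b⁻¹, a⁆, c⁆ * b⁻¹ ∈ S.Gs (i + j + k) :=
    hn.conj_mem _ (h ▸ add_comm q p ▸ S.commutator_mem (S.commutator_mem (inv_mem hb) ha) hc) b
  rw [S.bracket_bracket_of hx hy hz rfl (mem hx hy hz rfl),
    S.bracket_bracket_of hy hz hx (by omega) (mem hy hz hx (by omega)),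
    S.bracket_bracket_of hz hx hy (by omega) (mem hz hx hy (by omega)),
    ← of_mul, ← of_mul, of_eq_zero_iff, commutatorElement_hallWitt]
  exact one_mem _

theorem leibniz_of {i j k : ℕ} (hi : 1 ≤ i) (hj : 1 ≤ j) (hk : 1 ≤ k) {x y z : G}
    (hx : x ∈ S.Gs i) (hy : y ∈ S.Gs j) (hz : z ∈ S.Gs k) :
    S.bracket (S.of i x hx) (S.bracket (S.of j y hy) (S.of k z hz)) =
      S.bracket (S.bracket (S.of i x hx) (S.of j y hy)) (S.of k z hz) +
        S.bracket (S.of j y hy) (S.bracket (S.of i x hx) (S.of k z hz)) := by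
  rw [S.bracket_comm (S.of i x hx) (S.bracket (S.of j y hy) (S.of k z hz)),
    S.bracket_comm (S.of j y hy) (S.bracket (S.of i x hx) (S.of k z hz)),
    S.bracket_comm (S.of i x hx) (S.of k z hz), map_neg, AddMonoidHom.neg_apply, neg_neg,
    neg_eq_iff_add_eq_zero, ← S.jacobi_of hi hj hk hx hy hz]
  abel

theorem bracket_leibniz (a b c : S.L) :
    S.bracket a (S.bracket b c) = S.bracket (S.bracket a b) c + S.bracket b (S.bracket a c) := by
  induction a using S.induction_on with
  | zero => simp
  | add a a' ha ha' => simp only [map_add, AddMonoidHom.add_apply, ha, ha']; abel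
  | of i hi x hx =>
    induction b using S.induction_on with
    | zero => simp
    | add b b' hb hb' => simp only [map_add, AddMonoidHom.add_apply, hb, hb']; abel
    | of j hj y hy =>
      induction c using S.induction_on with
      | zero => simp
      | add c c' hc hc' => simp only [map_add, hc, hc']; abel
      | of k hk z hz => exact S.leibniz_of hi hj hk hx hy hz

instance : LieRing S.L :=
  { (inferInstance : AddCommGroup S.L) with
    bracket a b := S.bracket a b
    add_lie a b c := by rw [map_add, AddMonoidHom.add_apply]
    lie_add a b c := map_add _ _ _
    lie_self := S.bracket_self
    leibniz_lie := S.bracket_leibniz }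

theorem closure_of_eq_top :
    AddSubgroup.closure (⋃ n ∈ {n : ℕ | 1 ≤ n}, Set.range fun x : S.Gs n => S.of n x x.2) = ⊤ := by
  rw [eq_top_iff]
  rintro a -
  induction a using S.induction_on with
  | zero => exact zero_mem _
  | of n hn g hg => exact AddSubgroup.subset_closure (Set.mem_biUnion hn ⟨⟨g, hg⟩, rfl⟩)
  | add a b ha hb => exact add_mem ha hb

theorem closure_range_of (n : ℕ) :
    AddSubgroup.closure (Set.range fun x : S.Gs n => S.of n x x.2) = (DirectSum.of _ n).range := by
  have hmk : Function.Surjective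
      fun x : S.Gs n => Additive.ofMul (QuotientGroup.mk x : S.Component n) :=
    Additive.ofMul.surjective.comp QuotientGroup.mk_surjective
  rw [show (fun x : S.Gs n => S.of n x x.2) = DirectSum.of _ n ∘ _ from rfl, hmk.range_comp,
    ← AddMonoidHom.coe_range, AddSubgroup.closure_eq]

theorem iSupIndep_closure_range_of :
    iSupIndep fun n : {n : ℕ // 1 ≤ n} =>
      AddSubgroup.closure (Set.range fun x : S.Gs n => S.of n x x.2) := by
  simp_rw [closure_range_of]
  exact DirectSum.iSupIndep_range_of.comp Subtype.val_injective

def ofHom (n : ℕ) : S.Gs n →* Multiplicative S.L :=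
  MonoidHom.mk' (fun x => Multiplicative.ofAdd (S.of n x x.2))
    fun x y => congrArg Multiplicative.ofAdd (S.of_mul x.2 y.2)

end NSeries

/-- given an `N`-series `G = G₁ ≥ G₂ ≥ ⋯` (i.e. `[G_i, G_j] ≤ G_{i+j}`),
the direct sum `⊕ G_i/G_{i+1}` with bracket induced by group commutation is a
well-defined Lie ring. -/
theorem associated_lie_ring_exists
    (G : Type) [Group G] (Gs : ℕ → Subgroup G)
    (h1 : Gs 1 = ⊤)
    (hdesc : ∀ i, 1 ≤ i → Gs (i + 1) ≤ Gs i)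
    (hcomm : ∀ i j, 1 ≤ i → 1 ≤ j → ∀ x ∈ Gs i, ∀ y ∈ Gs j, ⁅x, y⁆ ∈ Gs (i + j)) :
    Nonempty (AssociatedLieRing G Gs hcomm) := by
  let S : NSeries G := ⟨Gs, h1, hdesc, fun i j hi hj => Subgroup.commutator_le.2 (hcomm i j hi hj)⟩
  exact ⟨{ L := S.L
           φ := S.ofHom
           ker_eq := fun i _ x => ofAdd_eq_one.trans (S.of_eq_zero_iff x.2)
           bracket_eq := fun i j _ _ x y => (S.bracket_of_of x.2 y.2).symm
           generates := S.closure_of_eq_top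
           indep := S.iSupIndep_closure_range_of }⟩
end

section
/- Let G be a finite group with an N-series (G_i) and let α be an automorphism of G preserving each G_i with gcd(|α|,|G|)=1. Then the subring of fixed points of the induced automorphism of the associated Lie ring L = ⊕ G_i/G_{i+1} coincides with the Lie ring associated to C_G(α) via the series (C_G(α) ∩ G_i). -/
open scoped commutatorElement

/-!
A fixed point of the induced automorphism on `G_i/G_{i+1}` is a coset `G_{i+1} x` with `x ∈ G_i`
that `α` maps to itself, so everything rests on: if `α` has order `n` prime to `|N|`, leaves `N`
invariant and maps the coset `N x` to itself, then it fixes a point of `N x`. Induct on `n`: for a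
prime `p ∣ n`, `β = α ^ (n / p)` permutes `N x` with `β ^ p = 1`, and `|N x| = |N|` is prime to `p`,
so `β` fixes some `y₀ ∈ N x`. On the `α`-invariant subgroup `C_G(β)` the order of `α` divides
`n / p`, and `α` maps `(N ∩ C_G(β)) y₀` to itself; induction yields the fixed point.
-/

open Set

theorem Set.MapsTo.exists_isFixedPt_of_iterate_prime {X : Type*} {f : X → X} {S : Set X}
    {p : ℕ} (hp : p.Prime) (hS : MapsTo f S S) (hf : ∀ y ∈ S, f^[p] y = y)
    (hcard : ¬p ∣ Nat.card S) : ∃ y ∈ S, f y = y := by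
  classical
  have : Fact p.Prime := ⟨hp⟩
  have : Finite S := Nat.finite_of_card_ne_zero fun h ↦ hcard (h ▸ dvd_zero p)
  let _ : Fintype S := Fintype.ofFinite S
  let g : Function.End S := hS.restrict f S S
  have hg : g ^ p ^ 1 = 1 := by
    rw [pow_one]
    funext y
    exact Subtype.ext <| (hS.coe_iterate_restrict y p).trans (hf y y.2)
  by_contra! hfree
  have hempty : IsEmpty g.fixedPoints := ⟨fun y ↦ hfree y.1 y.1.2 (congrArg Subtype.val y.2)⟩
  apply hcard
  rw [Nat.card_eq_fintype_card, ← Nat.modEq_zero_iff_dvd]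
  simpa using Equiv.Perm.card_fixedPoints_modEq hg

section CoprimeAction

variable {G : Type*} [Group G] (α : MulAut G) {K N : Subgroup G} {x : G}

theorem MulAut.mapsTo_inf_rightCoset (hK : ∀ g ∈ K, α g ∈ K) (hN : ∀ g ∈ N, α g ∈ N)
    (hx : α x * x⁻¹ ∈ N) : MapsTo α {y | y ∈ K ∧ y * x⁻¹ ∈ N} {y | y ∈ K ∧ y * x⁻¹ ∈ N} := by
  rintro y ⟨hyK, hyN⟩
  refine ⟨hK y hyK, ?_⟩
  have : α y * x⁻¹ = α (y * x⁻¹) * (α x * x⁻¹) := by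
    rw [map_mul, map_inv]; group
  exact this ▸ N.mul_mem (hN _ hyN) hx

theorem Subgroup.card_inf_rightCoset (hxK : x ∈ K) :
    Nat.card {y | y ∈ K ∧ y * x⁻¹ ∈ N} = Nat.card (N ⊓ K : Subgroup G) :=
  Nat.card_congr <| (Equiv.mulRight x⁻¹).subtypeEquiv fun y ↦
    ⟨fun ⟨hyK, hyN⟩ ↦ ⟨hyN, K.mul_mem hyK (K.inv_mem hxK)⟩,
      fun ⟨hyN, hyK⟩ ↦ ⟨by simpa using K.mul_mem hyK hxK, hyN⟩⟩

theorem MulAut.coe_pow (k : ℕ) : ⇑(α ^ k) = (⇑α)^[k] :=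
  hom_coe_pow _ rfl (fun _ _ ↦ rfl) α k

theorem MulAut.pow_apply_comm (k : ℕ) (g : G) : (α ^ k) (α g) = α ((α ^ k) g) := by
  rw [← MulAut.mul_apply, ← MulAut.mul_apply, ← pow_succ, pow_succ']

theorem MulAut.exists_fixed_mem_inf_rightCoset (n : ℕ) (hK : ∀ g ∈ K, α g ∈ K)
    (hN : ∀ g ∈ N, α g ∈ N) (hn : ∀ g ∈ K, (α ^ n) g = g) (hcop : n.Coprime (Nat.card N))
    (hxK : x ∈ K) (hx : α x * x⁻¹ ∈ N) : ∃ y ∈ K, α y = y ∧ y * x⁻¹ ∈ N := by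
  induction n using Nat.strong_induction_on generalizing K x with
  | _ n ih =>
  obtain rfl | rfl | hn2 : n = 0 ∨ n = 1 ∨ 2 ≤ n := by omega
  · obtain rfl : N = ⊥ := Subgroup.card_eq_one.mp ((Nat.coprime_zero_left _).mp hcop)
    exact ⟨x, hxK, by simpa [mul_inv_eq_one] using hx, by simp⟩
  · exact ⟨x, hxK, by simpa using hn x hxK, by simp⟩
  set p := n.minFac
  set k := n / p
  have hp : p.Prime := Nat.minFac_prime (by omega)
  have hkp : k * p = n := Nat.div_mul_cancel n.minFac_dvd
  have hS := α.mapsTo_inf_rightCoset hK hN hx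
  have hpS : ¬p ∣ Nat.card {y | y ∈ K ∧ y * x⁻¹ ∈ N} := by
    rw [Subgroup.card_inf_rightCoset hxK]
    exact fun hdvd ↦ hp.one_lt.ne' <| Nat.eq_one_of_dvd_coprimes hcop (Dvd.intro_left k hkp)
      (hdvd.trans (Subgroup.card_dvd_of_le inf_le_left))
  obtain ⟨y₀, ⟨hy₀K, hy₀N⟩, hy₀⟩ := (hS.iterate k).exists_isFixedPt_of_iterate_prime hp
    (fun y hy ↦ by rw [← Function.iterate_mul, hkp, ← MulAut.coe_pow]; exact hn y hy.1) hpS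
  rw [← MulAut.coe_pow] at hy₀
  let C : Subgroup G := K ⊓ (α ^ k).toMonoidHom.eqLocus (MonoidHom.id G)
  have hC : ∀ g ∈ C, α g ∈ C := fun g hg ↦
    ⟨hK g hg.1, show (α ^ k) (α g) = α g by rw [α.pow_apply_comm, show (α ^ k) g = g from hg.2]⟩
  have hαy₀ : α y₀ * y₀⁻¹ ∈ N := by
    simpa using N.mul_mem (hS ⟨hy₀K, hy₀N⟩).2 (N.inv_mem hy₀N)
  obtain ⟨z, hzC, hz, hzN⟩ := ih k (Nat.div_lt_self (by omega) hp.one_lt) hC (fun g hg ↦ hg.2)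
    (Nat.Coprime.coprime_dvd_left (Dvd.intro p hkp) hcop) (show y₀ ∈ C from ⟨hy₀K, hy₀⟩) hαy₀
  exact ⟨z, hzC.1, hz, by simpa [mul_assoc] using N.mul_mem hzN hy₀N⟩

end CoprimeAction

theorem fixed_points_of_induced_automorphism_general
    (G : Type) [Group G] (Gs : ℕ → Subgroup G)
    (L : Type) [LieRing L] (φ : (i : ℕ) → ↥(Gs i) →* Multiplicative L)
    (hker : ∀ i, 1 ≤ i → ∀ x : ↥(Gs i), φ i x = 1 ↔ (x : G) ∈ Gs (i + 1))
    (α : MulAut G)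
    (hcop : Nat.Coprime (orderOf α) (Nat.card G))
    (hinv : ∀ i, ∀ x : G, x ∈ Gs i → α x ∈ Gs i)
    (ψ : L ≃+ L)
    (hequiv : ∀ i (x : ↥(Gs i)),
      ψ (Multiplicative.toAdd (φ i x)) =
        Multiplicative.toAdd (φ i ⟨α (x : G), hinv i x x.2⟩)) :
    ∀ i, 1 ≤ i →
      {l : L | (∃ x : ↥(Gs i), Multiplicative.toAdd (φ i x) = l) ∧ ψ l = l} =
      {l : L | ∃ x : ↥(Gs i), α (x : G) = (x : G) ∧ Multiplicative.toAdd (φ i x) = l} := by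
  intro i hi
  have hφ_eq : ∀ x y : Gs i, φ i x = φ i y ↔ (x : G) * (y : G)⁻¹ ∈ Gs (i + 1) := fun x y ↦ by
    rw [← mul_inv_eq_one, ← map_inv, ← map_mul, hker i hi]; rfl
  ext l
  constructor
  · rintro ⟨⟨x, rfl⟩, hfix⟩
    rw [hequiv] at hfix
    obtain ⟨y, hyGi, hy, hyx⟩ := α.exists_fixed_mem_inf_rightCoset (orderOf α) (hinv i)
      (hinv (i + 1)) (fun g _ ↦ by rw [pow_orderOf_eq_one]; rfl)
      (hcop.coprime_dvd_right (Subgroup.card_subgroup_dvd_card _)) x.2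
      ((hφ_eq _ x).mp (Multiplicative.toAdd.injective hfix))
    exact ⟨⟨y, hyGi⟩, hy, by rw [(hφ_eq ⟨y, hyGi⟩ x).mpr hyx]⟩
  · rintro ⟨x, hαx, rfl⟩
    refine ⟨⟨x, rfl⟩, ?_⟩
    rw [hequiv]
    congr 2
    exact Subtype.ext hαx

/-- let `G` be a finite group with an `N`-series `(Gs i)`, with associated
Lie ring `L = ⊕ G_i/G_{i+1}` (presented by homomorphisms `φ i : G_i →* L` with kernel
`G_{i+1}`, bracket induced by commutation, additively generating `L` with independent
components).  Let `α` be an automorphism of `G` of order coprime to `|G|` preserving each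
`G_i`, and `ψ` the induced automorphism of `L`.  Then in each homogeneous component the
fixed points of `ψ` are exactly the images of elements of `C_G(α) ∩ G_i`; that is, the
fixed-point subring of `ψ` coincides with the Lie ring associated to `C_G(α)` via the
series `(C_G(α) ∩ G_i)`. -/
theorem fixed_points_of_induced_automorphism
    (G : Type) [Group G] [Finite G] (Gs : ℕ → Subgroup G)
    (h1 : Gs 1 = ⊤)
    (hdesc : ∀ i, 1 ≤ i → Gs (i + 1) ≤ Gs i)
    (hcomm : ∀ i j, 1 ≤ i → 1 ≤ j → ∀ x ∈ Gs i, ∀ y ∈ Gs j, ⁅x, y⁆ ∈ Gs (i + j))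
    (L : Type) [LieRing L] (φ : (i : ℕ) → ↥(Gs i) →* Multiplicative L)
    (hker : ∀ i, 1 ≤ i → ∀ x : ↥(Gs i), φ i x = 1 ↔ (x : G) ∈ Gs (i + 1))
    (hbr : ∀ i j (hi : 1 ≤ i) (hj : 1 ≤ j) (x : ↥(Gs i)) (y : ↥(Gs j)),
      Multiplicative.toAdd (φ (i + j) ⟨⁅(x : G), (y : G)⁆, hcomm i j hi hj x x.2 y y.2⟩) =
        ⁅Multiplicative.toAdd (φ i x), Multiplicative.toAdd (φ j y)⁆)
    (hgen : AddSubgroup.closure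
      (⋃ i ∈ {i : ℕ | 1 ≤ i},
        Set.range fun x : ↥(Gs i) => Multiplicative.toAdd (φ i x)) = ⊤)
    (hindep : iSupIndep fun i : {i : ℕ // 1 ≤ i} =>
      AddSubgroup.closure
        (Set.range fun x : ↥(Gs (i : ℕ)) => Multiplicative.toAdd (φ i x)))
    (α : MulAut G)
    (hcop : Nat.Coprime (orderOf α) (Nat.card G))
    (hinv : ∀ i, ∀ x : G, x ∈ Gs i → α x ∈ Gs i)
    (ψ : L ≃+ L)
    (hψbr : ∀ a b : L, ψ ⁅a, b⁆ = ⁅ψ a, ψ b⁆)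
    (hequiv : ∀ i (x : ↥(Gs i)),
      ψ (Multiplicative.toAdd (φ i x)) =
        Multiplicative.toAdd (φ i ⟨α (x : G), hinv i x x.2⟩)) :
    ∀ i, 1 ≤ i →
      {l : L | (∃ x : ↥(Gs i), Multiplicative.toAdd (φ i x) = l) ∧ ψ l = l} =
      {l : L | ∃ x : ↥(Gs i), α (x : G) = (x : G) ∧ Multiplicative.toAdd (φ i x) = l} :=
  fixed_points_of_induced_automorphism_general G Gs L φ hker α hcop hinv ψ hequiv
end

section
/- Let L be a Lie ring with p^k L = 0 for a prime p and positive integer k, and suppose γ_{c₁}(L) ≤ pL. Then γ_{k·c₁}(L) ≤ p^k L = 0, i.e. L is nilpotent of class less than k·c₁. -/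
/-- Auxiliary: if every element of `N` is `c • y` for some `y ∈ N'`, the same
relation passes to the bracket with `⊤`. -/
lemma aux_bracket_smul_step (L : Type) [LieRing L] (c : ℤ)
    (N N' : LieSubmodule ℤ L L)
    (h : ∀ x ∈ N, ∃ y ∈ N', x = c • y) :
    ∀ x ∈ ⁅(⊤ : LieIdeal ℤ L), N⁆, ∃ y ∈ ⁅(⊤ : LieIdeal ℤ L), N'⁆, x = c • y := by
  -- the set of elements of the form `c • y`, `y ∈ ⁅⊤, N'⁆`, is a Lie submodule
  let S : LieSubmodule ℤ L L :=
    { carrier := (fun y : L => c • y) '' (⁅(⊤ : LieIdeal ℤ L), N'⁆ : LieSubmodule ℤ L L)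
      add_mem' := by
        rintro a b ⟨ya, hya, rfl⟩ ⟨yb, hyb, rfl⟩
        exact ⟨ya + yb, add_mem hya hyb, smul_add c ya yb⟩
      zero_mem' := ⟨0, zero_mem _, smul_zero c⟩
      smul_mem' := by
        rintro t a ⟨ya, hya, rfl⟩
        exact ⟨t • ya, SMulMemClass.smul_mem t hya, (smul_comm c t ya)⟩
      lie_mem := by
        rintro z a ⟨ya, hya, rfl⟩
        exact ⟨⁅z, ya⁆, LieSubmodule.lie_mem _ hya, (lie_smul c z ya).symm⟩ }
  have hle : ⁅(⊤ : LieIdeal ℤ L), N⁆ ≤ S := by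
    rw [LieSubmodule.lie_le_iff]
    intro z _ m hm
    obtain ⟨y, hy, rfl⟩ := h m hm
    exact ⟨⁅z, y⁆, LieSubmodule.lie_mem_lie trivial hy, (lie_smul c z y).symm⟩
  intro x hx
  obtain ⟨y, hy, hxy⟩ := hle hx
  exact ⟨y, hy, hxy.symm⟩

/-- Iterated version of the previous lemma along the lower central series. -/
lemma aux_lcs_smul_iter (L : Type) [LieRing L] (c : ℤ) (m n n' : ℕ)
    (h : ∀ x ∈ LieModule.lowerCentralSeries ℤ L L n,
      ∃ y ∈ LieModule.lowerCentralSeries ℤ L L n', x = c • y) :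
    ∀ x ∈ LieModule.lowerCentralSeries ℤ L L (n + m),
      ∃ y ∈ LieModule.lowerCentralSeries ℤ L L (n' + m), x = c • y := by
  induction m with
  | zero => simpa using h
  | succ m ih =>
      have := aux_bracket_smul_step L c
        (LieModule.lowerCentralSeries ℤ L L (n + m))
        (LieModule.lowerCentralSeries ℤ L L (n' + m)) ih
      simpa [LieModule.lowerCentralSeries_succ, ← Nat.add_assoc] using this

/-- let `L` be a Lie ring with `p^k·L = 0` for a prime `p`, and suppose
`γ_{c₁}(L) ≤ pL` (here `γ_i(L) = LieModule.lowerCentralSeries ℤ L L (i-1)`).  Then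
`γ_{k·c₁}(L) ≤ p^k·L = 0`, i.e. `L` is nilpotent of class less than `k·c₁`. -/
theorem lie_ring_nilpotent_of_gamma_le_pL
    (p : ℕ) (hp : p.Prime) (k c₁ : ℕ) (hk : 0 < k) (hc₁ : 0 < c₁)
    (L : Type) [LieRing L]
    (hann : ∀ x : L, (p ^ k : ℕ) • x = 0)
    (hγ : ∀ x ∈ LieModule.lowerCentralSeries ℤ L L (c₁ - 1), ∃ y : L, x = (p : ℕ) • y) :
    LieModule.lowerCentralSeries ℤ L L (k * c₁ - 1) = ⊥ := by
  -- main claim: every element of `γ_{j·c₁}` is of the form `p^j • y`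
  have main : ∀ j : ℕ, 1 ≤ j →
      ∀ x ∈ LieModule.lowerCentralSeries ℤ L L (j * c₁ - 1),
        ∃ y : L, x = ((p : ℤ) ^ j) • y := by
    intro j hj
    induction j, hj using Nat.le_induction with
    | base =>
        intro x hx
        simpa using hγ x (by simpa using hx)
    | succ j hj ih =>
        intro x hx
        have hidx : (j + 1) * c₁ - 1 = (j * c₁ - 1) + c₁ := by
          have h1 : 1 ≤ j * c₁ := Nat.one_le_iff_ne_zero.mpr
            (Nat.mul_ne_zero (by omega) (by omega))
          have h2 : (j + 1) * c₁ = j * c₁ + c₁ := by ring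
          omega
        rw [hidx] at hx
        have h0 : ∀ x ∈ LieModule.lowerCentralSeries ℤ L L (j * c₁ - 1),
            ∃ y ∈ (LieModule.lowerCentralSeries ℤ L L 0), x = ((p : ℤ) ^ j) • y := by
          intro x hx
          obtain ⟨y, hy⟩ := ih x hx
          exact ⟨y, by simp, hy⟩
        obtain ⟨y, hy, hxy⟩ := aux_lcs_smul_iter L ((p : ℤ) ^ j) c₁ (j * c₁ - 1) 0 h0 x hx
        have hy0 : y ∈ LieModule.lowerCentralSeries ℤ L L c₁ := by simpa using hy
        have hy' : y ∈ LieModule.lowerCentralSeries ℤ L L (c₁ - 1) :=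
          LieModule.antitone_lowerCentralSeries ℤ L L (Nat.sub_le c₁ 1) hy0
        obtain ⟨z, hz⟩ := hγ y hy'
        refine ⟨z, ?_⟩
        rw [hxy, hz]
        rw [pow_succ]
        rw [mul_smul]
        congr 1
        simp [natCast_zsmul]
  rw [LieSubmodule.eq_bot_iff]
  intro x hx
  obtain ⟨y, hy⟩ := main k hk x hx
  rw [hy]
  have := hann y
  rw [← natCast_zsmul] at this
  simpa using this
end
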